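/- arXiv:2302.05627 — 6 statements merged into one kernel-verified Lean document; each statement's English description precedes it below -/
import Mathlib

section
/- Let (Ω, μ) be a finite measure space and let f : ℝ → ℝ be Lipschitz continuous with constant L and directionally differentiable at every point of ℝ. Then the induced Nemytskii operator f : L²(μ) → L²(μ), (f(v))(x) := f(v(x)), is directionally differentiable: for all η, h ∈ L²(μ), the difference quotients (f(η + τh) − f(η))/τ converge in the L²(μ)-norm, as τ ↓ 0, to the element of L²(μ) given a.e. by x ↦ f'(η(x); h(x)), where f'(y;d) := lim_{τ↓0}(f(y+τd) − f(y))/τ is the one-dimensional directional derivative (note |f'(y;d)| ≤ L|d|, so this function indeed lies in L²(μ)). -/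
/-!
The slopes `(f (y + τ d) - f y) / τ` are bounded by `L |d|`, hence so is their limit `f' y d`.
Evaluated along `η` and `h`, the slopes therefore converge pointwise to `f' (η x) (h x)` with
the domination `2 L |h x|` by an `L²` function, and dominated convergence for `∫⁻ |·|²` gives
convergence in `L²`.
-/

open MeasureTheory Filter Set Topology
open scoped ENNReal

section Slope

variable {f : ℝ → ℝ} {L : ℝ}

theorem abs_slope_le_of_abs_sub_le (hf : ∀ x y, |f x - f y| ≤ L * |x - y|)
    {τ : ℝ} (hτ : 0 < τ) (y d : ℝ) : |(f (y + τ * d) - f y) / τ| ≤ L * |d| := by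
  rw [abs_div, abs_of_pos hτ, div_le_iff₀ hτ]
  calc |f (y + τ * d) - f y| ≤ L * |y + τ * d - y| := hf _ _
    _ = L * |d| * τ := by rw [add_sub_cancel_left, abs_mul, abs_of_pos hτ]; ring

theorem abs_le_of_tendsto_slope (hf : ∀ x y, |f x - f y| ≤ L * |x - y|) {y d a : ℝ}
    (ha : Tendsto (fun τ => (f (y + τ * d) - f y) / τ) (𝓝[>] 0) (𝓝 a)) : |a| ≤ L * |d| :=
  le_of_tendsto ha.abs <| eventually_nhdsWithin_of_forall fun _ hτ =>
    abs_slope_le_of_abs_sub_le hf hτ y d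

theorem abs_slope_sub_le_of_tendsto_slope (hf : ∀ x y, |f x - f y| ≤ L * |x - y|)
    {y d a : ℝ} (ha : Tendsto (fun τ => (f (y + τ * d) - f y) / τ) (𝓝[>] 0) (𝓝 a))
    {τ : ℝ} (hτ : 0 < τ) : |(f (y + τ * d) - f y) / τ - a| ≤ 2 * L * |d| := by
  calc _ ≤ |(f (y + τ * d) - f y) / τ| + |a| := abs_sub _ _
    _ ≤ L * |d| + L * |d| :=
      add_le_add (abs_slope_le_of_abs_sub_le hf hτ y d) (abs_le_of_tendsto_slope hf ha)
    _ = 2 * L * |d| := by ring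

end Slope

section DominatedConvergence

variable {α E ι : Type*} [MeasurableSpace α] {μ : Measure α} [NormedAddCommGroup E]
  {l : Filter ι} [l.IsCountablyGenerated]

theorem MeasureTheory.tendsto_eLpNorm_sub_of_dominated {p : ℝ≥0∞} (hp0 : p ≠ 0) (hp : p ≠ ∞)
    {F : ι → α → E} {g : α → E} {bound : α → ℝ}
    (hF : ∀ᶠ i in l, AEStronglyMeasurable (F i) μ) (hg : AEStronglyMeasurable g μ)
    (hbound : MemLp bound p μ) (h_le : ∀ᶠ i in l, ∀ᵐ x ∂μ, ‖F i x - g x‖ ≤ bound x)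
    (h_lim : ∀ᵐ x ∂μ, Tendsto (fun i => F i x) l (𝓝 (g x))) :
    Tendsto (fun i => eLpNorm (F i - g) p μ) l (𝓝 0) := by
  have hr : 0 < p.toReal := ENNReal.toReal_pos hp0 hp
  simp_rw [eLpNorm_eq_lintegral_rpow_enorm_toReal hp0 hp]
  have h_int : Tendsto (fun i => ∫⁻ x, ‖(F i - g) x‖ₑ ^ p.toReal ∂μ) l (𝓝 0) := by
    rw [← lintegral_zero (μ := μ)]
    refine tendsto_lintegral_filter_of_dominated_convergence' (fun x => ‖bound x‖ₑ ^ p.toReal)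
      ?_ ?_ (lintegral_rpow_enorm_lt_top_of_eLpNorm_lt_top hp0 hp hbound.eLpNorm_lt_top).ne ?_
    · filter_upwards [hF] with i hFi
      exact (hFi.sub hg).enorm.pow_const _
    · filter_upwards [h_le] with i hi
      filter_upwards [hi] with x hx
      gcongr
      exact enorm_le_iff_norm_le.2 (hx.trans (le_abs_self _))
    · filter_upwards [h_lim] with x hx
      have := ((continuous_enorm.tendsto _).comp (tendsto_sub_nhds_zero_iff.2 hx)).ennrpow_const
        p.toReal
      simpa [ENNReal.zero_rpow_of_pos hr] using this
  simpa [ENNReal.zero_rpow_of_pos (inv_pos.2 hr)] using h_int.ennrpow_const (1 / p.toReal)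

end DominatedConvergence

theorem MeasureTheory.Lp.coeFn_inv_smul_sub_superposition {α : Type*} [MeasurableSpace α] {μ : Measure α}
    {p : ℝ≥0∞} [Fact (1 ≤ p)] {f : ℝ → ℝ} {N : Lp ℝ p μ → Lp ℝ p μ}
    (hN : ∀ v : Lp ℝ p μ, (N v : α → ℝ) =ᵐ[μ] fun x => f ((v : α → ℝ) x))
    (η h : Lp ℝ p μ) (τ : ℝ) :
    ⇑(τ⁻¹ • (N (η + τ • h) - N η)) =ᵐ[μ] fun x => (f (η x + τ * h x) - f (η x)) / τ := by
  filter_upwards [Lp.coeFn_smul τ⁻¹ (N (η + τ • h) - N η), Lp.coeFn_sub (N (η + τ • h)) (N η),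
    hN (η + τ • h), hN η, Lp.coeFn_add η (τ • h), Lp.coeFn_smul τ h]
    with x h_smul h_sub h_shift h_base h_add h_smul'
  simp only [h_smul, h_sub, h_shift, h_base, h_add, h_smul', Pi.smul_apply, Pi.sub_apply,
    Pi.add_apply, smul_eq_mul, div_eq_inv_mul]

theorem nemytskii_directionally_differentiable_general
    {α : Type*} [MeasurableSpace α] (μ : Measure α)
    (f : ℝ → ℝ) (L : ℝ)
    (hf : ∀ x y : ℝ, |f x - f y| ≤ L * |x - y|)
    (f' : ℝ → ℝ → ℝ)
    (hf' : ∀ y d : ℝ,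
      Tendsto (fun τ : ℝ => (f (y + τ * d) - f y) / τ) (nhdsWithin 0 (Ioi 0)) (nhds (f' y d)))
    (N : Lp ℝ 2 μ → Lp ℝ 2 μ)
    (hN : ∀ v : Lp ℝ 2 μ, (N v : α → ℝ) =ᵐ[μ] fun x => f ((v : α → ℝ) x))
    (η h : Lp ℝ 2 μ) :
    ∃ D : Lp ℝ 2 μ,
      ((D : α → ℝ) =ᵐ[μ] fun x => f' ((η : α → ℝ) x) ((h : α → ℝ) x)) ∧
      Tendsto (fun τ : ℝ => τ⁻¹ • (N (η + τ • h) - N η)) (nhdsWithin 0 (Ioi 0)) (nhds D) := by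
  set q : ℝ → α → ℝ := fun τ x => (f (η x + τ * h x) - f (η x)) / τ
  set g : α → ℝ := fun x => f' (η x) (h x)
  have hf_cont : Continuous f :=
    (LipschitzWith.of_dist_le' (K := L) fun x y => by
      simpa only [Real.dist_eq] using hf x y).continuous
  have hq_meas (τ : ℝ) : AEStronglyMeasurable (q τ) μ := by
    have := Lp.aestronglyMeasurable η
    have := Lp.aestronglyMeasurable h
    fun_prop
  have hg_meas : AEStronglyMeasurable g μ :=
    aestronglyMeasurable_of_tendsto_ae _ hq_meas (ae_of_all _ fun x => hf' _ _)
  have hg : MemLp g 2 μ := ((Lp.memLp h).norm.const_mul L).of_le hg_meas <|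
    ae_of_all _ fun x => (abs_le_of_tendsto_slope hf (hf' _ _)).trans (le_abs_self _)
  refine ⟨hg.toLp g, hg.coeFn_toLp, ?_⟩
  rw [Lp.tendsto_Lp_iff_tendsto_eLpNorm _ g hg]
  -- Each quotient agrees with `q τ` only a.e., with a null set depending on `τ`; so the
  -- explicit slopes `q τ` enter only through their `L²` distance to `g`.
  refine (tendsto_eLpNorm_sub_of_dominated two_ne_zero ENNReal.ofNat_ne_top
    (Eventually.of_forall hq_meas) hg_meas ((Lp.memLp h).norm.const_mul (2 * L)) ?_
    (ae_of_all _ fun x => hf' _ _)).congr fun τ => eLpNorm_congr_ae ?_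
  · exact eventually_nhdsWithin_of_forall fun τ hτ => ae_of_all _ fun x =>
      abs_slope_sub_le_of_tendsto_slope hf (hf' _ _) hτ
  · exact ((Lp.coeFn_inv_smul_sub_superposition hN η h τ).sub (EventuallyEq.refl _ g)).symm

/-- **Directional differentiability of the Nemytskii operator of a Lipschitz,
directionally differentiable function on `L²(μ)`, `μ` finite.**
Here `N` is the Nemytskii (superposition) operator induced by `f` on `L²(μ)`, and
`f' y d` denotes the one-dimensional directional derivative of `f` at `y` in direction `d`.
The difference quotients `(N(η + τh) − N(η))/τ` converge in `L²(μ)`, as `τ ↓ 0`, to the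
element of `L²(μ)` represented a.e. by `x ↦ f'(η(x); h(x))`. -/
theorem nemytskii_directionally_differentiable
    {α : Type*} [MeasurableSpace α] (μ : Measure α) [IsFiniteMeasure μ]
    (f : ℝ → ℝ) (L : ℝ) (hL : 0 ≤ L)
    (hf : ∀ x y : ℝ, |f x - f y| ≤ L * |x - y|)
    (f' : ℝ → ℝ → ℝ)
    (hf' : ∀ y d : ℝ,
      Tendsto (fun τ : ℝ => (f (y + τ * d) - f y) / τ) (nhdsWithin 0 (Ioi 0)) (nhds (f' y d)))
    (N : Lp ℝ 2 μ → Lp ℝ 2 μ)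
    (hN : ∀ v : Lp ℝ 2 μ, (N v : α → ℝ) =ᵐ[μ] fun x => f ((v : α → ℝ) x))
    (η h : Lp ℝ 2 μ) :
    ∃ D : Lp ℝ 2 μ,
      ((D : α → ℝ) =ᵐ[μ] fun x => f' ((η : α → ℝ) x) ((h : α → ℝ) x)) ∧
      Tendsto (fun τ : ℝ => τ⁻¹ • (N (η + τ • h) - N η)) (nhdsWithin 0 (Ioi 0)) (nhds D) :=
  nemytskii_directionally_differentiable_general μ f L hf f' hf' N hN η h
end

section
/- Consider the abstract state equation: then for every ℓ : (0,T) → F strongly measurable with ∫₀ᵀ ‖ℓ(s)‖²_F ds < ∞, there exists a unique continuous function q : [0,T] → E satisfying q(0) = 0 and q(t) = (1/ϵ) ∫₀ᵗ (B(q(s), ℓ(s)) − f(𝓗(q)(s)))⁺ ds for all t ∈ [0,T]. -/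
/-! The right-hand side `q ↦ ϵ⁻¹ ∫₀ᵗ (B(q, ℓ) − f(𝓗 q))⁺` is Lipschitz in Volterra form on
`C([0, T], E)`: at time `t` the images of `q₁`, `q₂` differ by at most `K ∫₀ᵗ ‖q₁ − q₂‖`, because
`x ↦ x⁺` is 1-Lipschitz in a normed lattice, the Nemytskii operator inherits the Lipschitz constant
of `f` through the solidity of the `L²` norm, and the history term `∫₀ˢ ‖q₁ − q₂‖` is bounded by
`∫₀ᵗ ‖q₁ − q₂‖`. By induction the `n`-th iterate of the Picard map is Lipschitz with constant
`(K T)ⁿ / n!`, so some iterate is a contraction of the complete space `C([0, T], E)`, and Banach's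
fixed point theorem gives exactly one continuous solution. -/

open MeasureTheory Filter Set
open scoped Nat NNReal ENNReal

theorem mul_integral_Ioc_pow_div_factorial (K : ℝ) (n : ℕ) {t : ℝ} (ht : 0 ≤ t) :
    K * ∫ s in Ioc 0 t, (K * s) ^ n / n ! = (K * t) ^ (n + 1) / (n + 1)! := by
  simp_rw [mul_pow, ← intervalIntegral.integral_of_le ht, mul_div_right_comm,
    intervalIntegral.integral_const_mul, integral_pow, Nat.factorial_succ]
  push_cast
  field_simp
  ring

section Volterra

variable {E : Type*} [NormedAddCommGroup E] {T : ℝ}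

def VolterraLipschitzWith (hT : 0 ≤ T) (K : ℝ) (Φ : C(Icc 0 T, E) → C(Icc 0 T, E)) : Prop :=
  ∀ u v (t : Icc 0 T),
    ‖Φ u t - Φ v t‖ ≤ K * ∫ s in Ioc 0 (t : ℝ), ‖IccExtend hT u s - IccExtend hT v s‖

theorem VolterraLipschitzWith.norm_iterate_apply_sub_le {hT : 0 ≤ T}
    {Φ : C(Icc 0 T, E) → C(Icc 0 T, E)} {K : ℝ} (hK : 0 ≤ K) (hΦ : VolterraLipschitzWith hT K Φ)
    (n : ℕ) (u v : C(Icc 0 T, E)) (t : Icc 0 T) :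
    ‖(Φ^[n] u) t - (Φ^[n] v) t‖ ≤ (K * t) ^ n / n ! * dist u v := by
  induction n generalizing t with
  | zero => simpa [dist_eq_norm_sub] using ContinuousMap.dist_apply_le_dist (f := u) (g := v) t
  | succ n ih =>
    have ht : (0 : ℝ) ≤ t := t.2.1
    have hbound : ∀ s ∈ Ioc (0 : ℝ) t, ‖IccExtend hT (Φ^[n] u) s - IccExtend hT (Φ^[n] v) s‖
        ≤ (K * s) ^ n / n ! * dist u v := fun s hs => by
      have hsI : s ∈ Icc 0 T := ⟨hs.1.le, hs.2.trans t.2.2⟩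
      simpa only [IccExtend_of_mem hT _ hsI] using ih ⟨s, hsI⟩
    rw [Function.iterate_succ_apply', Function.iterate_succ_apply']
    calc _ ≤ K * ∫ s in Ioc 0 (t : ℝ), ‖IccExtend hT (Φ^[n] u) s - IccExtend hT (Φ^[n] v) s‖ :=
          hΦ _ _ t
      _ ≤ K * ∫ s in Ioc 0 (t : ℝ), (K * s) ^ n / n ! * dist u v := by
          refine mul_le_mul_of_nonneg_left (setIntegral_mono_on ?_ ?_ measurableSet_Ioc hbound) hK
          · exact (((ContinuousMap.IccExtend hT (Φ^[n] u)).continuous.sub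
              (ContinuousMap.IccExtend hT (Φ^[n] v)).continuous).norm).integrableOn_Ioc
          · exact (by fun_prop : Continuous fun s : ℝ => (K * s) ^ n / n ! * dist u v)
              |>.integrableOn_Ioc
      _ = (K * t) ^ (n + 1) / (n + 1)! * dist u v := by
          rw [integral_mul_const, ← mul_assoc, mul_integral_Ioc_pow_div_factorial K n ht]

theorem VolterraLipschitzWith.dist_iterate_le {hT : 0 ≤ T}
    {Φ : C(Icc 0 T, E) → C(Icc 0 T, E)} {K : ℝ} (hK : 0 ≤ K) (hΦ : VolterraLipschitzWith hT K Φ)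
    (n : ℕ) (u v : C(Icc 0 T, E)) :
    dist (Φ^[n] u) (Φ^[n] v) ≤ (K * T) ^ n / n ! * dist u v := by
  refine (ContinuousMap.dist_le (by positivity)).2 fun t => ?_
  rw [dist_eq_norm_sub]
  refine (hΦ.norm_iterate_apply_sub_le hK n u v t).trans ?_
  have ht := t.2
  gcongr
  · exact mul_nonneg hK ht.1
  · exact ht.2

theorem VolterraLipschitzWith.existsUnique_fixedPt [CompleteSpace E] {hT : 0 ≤ T}
    {Φ : C(Icc 0 T, E) → C(Icc 0 T, E)} {K : ℝ} (hK : 0 ≤ K) (hΦ : VolterraLipschitzWith hT K Φ) :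
    ∃! u, Φ u = u := by
  obtain ⟨n, hn⟩ : ∃ n : ℕ, (K * T) ^ n / n ! < 1 :=
    ((FloorSemiring.tendsto_pow_div_factorial_atTop (K * T)).eventually_lt_const one_pos).exists
  have hcontr : ContractingWith ⟨(K * T) ^ n / n !, by positivity⟩ (Φ^[n]) :=
    ⟨hn, LipschitzWith.of_dist_le_mul (hΦ.dist_iterate_le hK n)⟩
  have : Nonempty C(Icc 0 T, E) := ⟨0⟩
  exact ⟨_, hcontr.isFixedPt_fixedPoint_iterate,
    fun u hu => hcontr.fixedPoint_unique (Function.IsFixedPt.iterate hu n)⟩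

variable [NormedSpace ℝ E]

noncomputable def volterraMap (hT : 0 ≤ T) (G : (ℝ → E) → ℝ → E)
    (hG : ∀ q, ContinuousOn q (Icc 0 T) → IntegrableOn (G q) (Icc 0 T)) (u : C(Icc 0 T, E)) :
    C(Icc 0 T, E) where
  toFun t := ∫ s in Ioc 0 (t : ℝ), G (IccExtend hT u) s
  continuous_toFun := (intervalIntegral.continuousOn_primitive
    (hG _ (ContinuousMap.IccExtend hT u).continuous.continuousOn)).domRestrict

theorem volterra_integral_equation_exists_unique [CompleteSpace E] (hT : 0 ≤ T)
    {G : (ℝ → E) → ℝ → E} {K : ℝ} (hK : 0 ≤ K)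
    (hG_int : ∀ q, ContinuousOn q (Icc 0 T) → IntegrableOn (G q) (Icc 0 T))
    (hG_lip : ∀ p q, ContinuousOn p (Icc 0 T) → ContinuousOn q (Icc 0 T) → ∀ t ∈ Icc 0 T,
      ‖(∫ s in Ioc 0 t, G p s) - ∫ s in Ioc 0 t, G q s‖ ≤ K * ∫ s in Ioc 0 t, ‖p s - q s‖) :
    ∃ q : ℝ → E, ContinuousOn q (Icc 0 T) ∧ (∀ t ∈ Icc 0 T, q t = ∫ s in Ioc 0 t, G q s) ∧
      ∀ q' : ℝ → E, ContinuousOn q' (Icc 0 T) → (∀ t ∈ Icc 0 T, q' t = ∫ s in Ioc 0 t, G q' s) →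
        EqOn q' q (Icc 0 T) := by
  have hext (u : C(Icc 0 T, E)) : ContinuousOn (IccExtend hT u) (Icc 0 T) :=
    (ContinuousMap.IccExtend hT u).continuous.continuousOn
  have hlocal : ∀ p q, ContinuousOn p (Icc 0 T) → ContinuousOn q (Icc 0 T) → EqOn p q (Icc 0 T) →
      ∀ t ∈ Icc 0 T, ∫ s in Ioc 0 t, G p s = ∫ s in Ioc 0 t, G q s := by
    intro p q hp hq hpq t ht
    have hzero : ∫ s in Ioc 0 t, ‖p s - q s‖ = 0 := setIntegral_eq_zero_of_forall_eq_zero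
      fun s hs => by rw [hpq ⟨hs.1.le, hs.2.trans ht.2⟩, sub_self, norm_zero]
    exact sub_eq_zero.1 (by simpa [hzero] using hG_lip p q hp hq t ht)
  have hΦ : VolterraLipschitzWith hT K (volterraMap hT G hG_int) :=
    fun u v t => hG_lip _ _ (hext u) (hext v) t t.2
  obtain ⟨u, hu, hu_unique⟩ := hΦ.existsUnique_fixedPt hK
  refine ⟨IccExtend hT u, hext u, fun t ht => ?_, fun q' hq' hq'_eq t ht => ?_⟩
  · calc IccExtend hT u t = volterraMap hT G hG_int u ⟨t, ht⟩ := by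
          rw [IccExtend_of_mem hT _ ht, hu]
      _ = _ := rfl
  · let u' : C(Icc 0 T, E) := ⟨(Icc 0 T).domRestrict q', hq'.domRestrict⟩
    have hu' : EqOn (IccExtend hT u') q' (Icc 0 T) := fun s hs => IccExtend_of_mem hT _ hs
    have hfix : volterraMap hT G hG_int u' = u' := by
      ext ⟨s, hs⟩
      exact (hlocal _ _ (hext u') hq' hu' s hs).trans (hq'_eq s hs).symm
    rw [← hu' ht, hu_unique u' hfix]

end Volterra

namespace MeasureTheory.Lp

theorem lipschitzWith_nemytskii {α : Type*} [MeasurableSpace α] {μ : Measure α} {p : ℝ≥0∞}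
    [Fact (1 ≤ p)] {f : ℝ → ℝ} {K : ℝ≥0} (hf : LipschitzWith K f) {fE : Lp ℝ p μ → Lp ℝ p μ}
    (hfE : ∀ v : Lp ℝ p μ, fE v =ᵐ[μ] fun x => f (v x)) : LipschitzWith K fE := by
  refine LipschitzWith.of_dist_le_mul fun u v => ?_
  have hpt : |fE u - fE v| ≤ |(K : ℝ) • (u - v)| := by
    rw [← Lp.coeFn_le]
    filter_upwards [Lp.coeFn_abs (fE u - fE v), Lp.coeFn_abs ((K : ℝ) • (u - v)),
      Lp.coeFn_sub (fE u) (fE v), Lp.coeFn_smul (K : ℝ) (u - v), Lp.coeFn_sub u v,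
      hfE u, hfE v] with x h₁ h₂ h₃ h₄ h₅ h₆ h₇
    simp only [h₁, h₂, h₃, h₄, h₅, h₆, h₇, Pi.sub_apply, Pi.smul_apply, smul_eq_mul, abs_mul,
      NNReal.abs_eq, ← Real.dist_eq]
    exact hf.dist_le_mul _ _
  calc dist (fE u) (fE v) = ‖fE u - fE v‖ := dist_eq_norm_sub _ _
    _ ≤ ‖(K : ℝ) • (u - v)‖ := HasSolidNorm.solid hpt
    _ = K * dist u v := by rw [norm_smul, NNReal.norm_eq, dist_eq_norm_sub]

end MeasureTheory.Lp

section StateEquation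

variable {E F : Type*} [NormedAddCommGroup E] [Lattice E] [HasSolidNorm E] [IsOrderedAddMonoid E]
  [NormedSpace ℝ E] [NormedAddCommGroup F] [NormedSpace ℝ F]

def stateIntegrand (B : E × F →L[ℝ] E) (fE : E → E) (H : (ℝ → E) → ℝ → E) (ℓ : ℝ → F)
    (c : ℝ) (q : ℝ → E) (s : ℝ) : E :=
  c • ((B (q s, ℓ s) - fE (H q s)) ⊔ 0)

variable {B : E × F →L[ℝ] E} {fE : E → E} {Kf : ℝ≥0} {H : (ℝ → E) → ℝ → E} {ℓ : ℝ → F}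
  {T LH : ℝ}

theorem norm_sup_zero_sub_sup_zero_le (hfE : LipschitzWith Kf fE) (x y a b : E) (z : F) :
    ‖(B (x, z) - fE a) ⊔ 0 - (B (y, z) - fE b) ⊔ 0‖ ≤ ‖B‖ * ‖x - y‖ + Kf * ‖a - b‖ := by
  have hB : B (x, z) - B (y, z) = B (x - y, 0) := by rw [← map_sub, Prod.mk_sub_mk, sub_self]
  calc _ ≤ ‖(B (x, z) - fE a) - (B (y, z) - fE b)‖ := norm_sup_sub_sup_le_norm _ _ _
    _ = ‖B (x - y, 0) - (fE a - fE b)‖ := by rw [← hB]; congr 1; abel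
    _ ≤ ‖B (x - y, 0)‖ + ‖fE a - fE b‖ := norm_sub_le _ _
    _ ≤ ‖B‖ * ‖x - y‖ + Kf * ‖a - b‖ := by
      gcongr
      · simpa using B.le_opNorm (x - y, 0)
      · exact hfE.norm_sub_le a b

theorem integrableOn_stateIntegrand (hfE : Continuous fE)
    (hH : ∀ q, ContinuousOn q (Icc 0 T) → ContinuousOn (H q) (Icc 0 T))
    (hℓ : IntegrableOn ℓ (Icc 0 T)) (c : ℝ) (q : ℝ → E) (hq : ContinuousOn q (Icc 0 T)) :
    IntegrableOn (stateIntegrand B fE H ℓ c q) (Icc 0 T) := by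
  have hB : IntegrableOn (fun s => B (q s, ℓ s)) (Icc 0 T) :=
    B.integrable_comp (hq.integrableOn_Icc.prodMk hℓ)
  have hfH : IntegrableOn (fun s => fE (H q s)) (Icc 0 T) :=
    (hfE.comp_continuousOn (hH q hq)).integrableOn_Icc
  exact ((hB.sub hfH).sup (integrableOn_const (by simp))).smul c

theorem norm_integral_stateIntegrand_sub_le (hfE : LipschitzWith Kf fE) (hLH : 0 ≤ LH)
    (hH : ∀ q, ContinuousOn q (Icc 0 T) → ContinuousOn (H q) (Icc 0 T))
    (hH_lip : ∀ q₁ q₂ : ℝ → E, ContinuousOn q₁ (Icc 0 T) → ContinuousOn q₂ (Icc 0 T) →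
      ∀ t ∈ Icc 0 T, ‖H q₁ t - H q₂ t‖ ≤ LH * ∫ s in Ioc 0 t, ‖q₁ s - q₂ s‖)
    (hℓ : IntegrableOn ℓ (Icc 0 T)) (c : ℝ) {p q : ℝ → E} (hp : ContinuousOn p (Icc 0 T))
    (hq : ContinuousOn q (Icc 0 T)) {t : ℝ} (ht : t ∈ Icc 0 T) :
    ‖(∫ s in Ioc 0 t, stateIntegrand B fE H ℓ c p s) -
        ∫ s in Ioc 0 t, stateIntegrand B fE H ℓ c q s‖ ≤
      ‖c‖ * (‖B‖ + Kf * LH * T) * ∫ s in Ioc 0 t, ‖p s - q s‖ := by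
  have hIoc : Ioc 0 t ⊆ Icc 0 T := Ioc_subset_Icc_self.trans (Icc_subset_Icc_right ht.2)
  have hg : IntegrableOn (fun s => ‖p s - q s‖) (Ioc 0 t) :=
    ((hp.sub hq).norm.integrableOn_Icc).mono_set hIoc
  set D := ∫ s in Ioc 0 t, ‖p s - q s‖
  have hpt : ∀ s ∈ Ioc 0 t, ‖stateIntegrand B fE H ℓ c p s - stateIntegrand B fE H ℓ c q s‖
      ≤ ‖c‖ * (‖B‖ * ‖p s - q s‖ + Kf * LH * D) := by
    intro s hs
    rw [stateIntegrand, stateIntegrand, ← smul_sub, norm_smul, mul_assoc (Kf : ℝ)]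
    gcongr
    refine (norm_sup_zero_sub_sup_zero_le hfE _ _ _ _ _).trans ?_
    gcongr
    calc ‖H p s - H q s‖ ≤ LH * ∫ r in Ioc 0 s, ‖p r - q r‖ := hH_lip p q hp hq s (hIoc hs)
      _ ≤ LH * D := by
        gcongr
        exact setIntegral_mono_set hg (Eventually.of_forall fun _ => norm_nonneg _)
          (Ioc_subset_Ioc_right hs.2).eventuallyLE
  have hGp : IntegrableOn (stateIntegrand B fE H ℓ c p) (Ioc 0 t) :=
    (integrableOn_stateIntegrand hfE.continuous hH hℓ c p hp).mono_set hIoc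
  have hGq : IntegrableOn (stateIntegrand B fE H ℓ c q) (Ioc 0 t) :=
    (integrableOn_stateIntegrand hfE.continuous hH hℓ c q hq).mono_set hIoc
  calc _ = ‖∫ s in Ioc 0 t, (stateIntegrand B fE H ℓ c p s - stateIntegrand B fE H ℓ c q s)‖ :=
        by
        rw [integral_sub hGp hGq]
    _ ≤ ∫ s in Ioc 0 t, ‖stateIntegrand B fE H ℓ c p s - stateIntegrand B fE H ℓ c q s‖ :=
        norm_integral_le_integral_norm _
    _ ≤ ∫ s in Ioc 0 t, ‖c‖ * (‖B‖ * ‖p s - q s‖ + Kf * LH * D) :=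
        setIntegral_mono_on (hGp.sub hGq).norm
          (((hg.const_mul _).add (integrableOn_const (by simp))).const_mul _) measurableSet_Ioc hpt
    _ = ‖c‖ * (‖B‖ + Kf * LH * t) * D := by
        rw [integral_const_mul, integral_add (hg.const_mul _) (integrableOn_const (by simp)),
          integral_const_mul, setIntegral_const, Real.volume_real_Ioc_of_le ht.1, smul_eq_mul]
        ring
    _ ≤ ‖c‖ * (‖B‖ + Kf * LH * T) * D := by
        gcongr
        exact ht.2

end StateEquation

theorem state_equation_exists_unique_general
    {α : Type*} [MeasurableSpace α] (μ : Measure α)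
    {F : Type*} [NormedAddCommGroup F] [InnerProductSpace ℝ F]
    (ϵ T : ℝ) (hT : 0 < T)
    (B : Lp ℝ 2 μ × F →L[ℝ] Lp ℝ 2 μ)
    (f : ℝ → ℝ) (Lf : ℝ)
    (hf : ∀ x y : ℝ, |f x - f y| ≤ Lf * |x - y|)
    (fE : Lp ℝ 2 μ → Lp ℝ 2 μ)
    (hfE : ∀ v : Lp ℝ 2 μ, (fE v : α → ℝ) =ᵐ[μ] fun x => f ((v : α → ℝ) x))
    (H : (ℝ → Lp ℝ 2 μ) → (ℝ → Lp ℝ 2 μ)) (LH : ℝ) (hLH : 0 ≤ LH)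
    (Hcont : ∀ q : ℝ → Lp ℝ 2 μ, ContinuousOn q (Icc 0 T) → ContinuousOn (H q) (Icc 0 T))
    (Hlip : ∀ q₁ q₂ : ℝ → Lp ℝ 2 μ, ContinuousOn q₁ (Icc 0 T) → ContinuousOn q₂ (Icc 0 T) →
      ∀ t ∈ Icc (0:ℝ) T,
        ‖H q₁ t - H q₂ t‖ ≤ LH * ∫ s in Ioc (0:ℝ) t, ‖q₁ s - q₂ s‖)
    (ℓ : ℝ → F) (hℓ : MemLp ℓ 2 (volume.restrict (Ioc (0:ℝ) T))) :
    ∃ q : ℝ → Lp ℝ 2 μ,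
      (ContinuousOn q (Icc 0 T) ∧ q 0 = 0 ∧
        ∀ t ∈ Icc (0:ℝ) T,
          q t = ϵ⁻¹ • ∫ s in Ioc (0:ℝ) t, ((B (q s, ℓ s) - fE (H q s)) ⊔ 0)) ∧
      ∀ q' : ℝ → Lp ℝ 2 μ,
        (ContinuousOn q' (Icc 0 T) ∧ q' 0 = 0 ∧
          ∀ t ∈ Icc (0:ℝ) T,
            q' t = ϵ⁻¹ • ∫ s in Ioc (0:ℝ) t, ((B (q' s, ℓ s) - fE (H q' s)) ⊔ 0)) →
        ∀ t ∈ Icc (0:ℝ) T, q' t = q t := by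
  have hfE_lip : LipschitzWith (Real.toNNReal Lf) fE :=
    Lp.lipschitzWith_nemytskii (LipschitzWith.of_dist_le' fun x y => by
      simpa only [Real.dist_eq] using hf x y) hfE
  have hℓ_int : IntegrableOn ℓ (Icc 0 T) :=
    (integrableOn_Icc_iff_integrableOn_Ioc).2 (hℓ.integrable one_le_two)
  obtain ⟨q, hq, hq_eq, hq_unique⟩ := volterra_integral_equation_exists_unique hT.le
    (by positivity : 0 ≤ ‖ϵ⁻¹‖ * (‖B‖ + Real.toNNReal Lf * LH * T))
    (integrableOn_stateIntegrand hfE_lip.continuous Hcont hℓ_int ϵ⁻¹)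
    fun p q hp hq t ht =>
      norm_integral_stateIntegrand_sub_le hfE_lip hLH Hcont Hlip hℓ_int ϵ⁻¹ hp hq ht
  have hq_eq' : ∀ t ∈ Icc 0 T, q t = ϵ⁻¹ • ∫ s in Ioc 0 t, (B (q s, ℓ s) - fE (H q s)) ⊔ 0 :=
    fun t ht => (hq_eq t ht).trans (integral_smul _ _)
  refine ⟨q, ⟨hq, by simpa using hq_eq' 0 ⟨le_rfl, hT.le⟩, hq_eq'⟩, ?_⟩
  rintro q' ⟨hq', -, hq'_eq⟩ t ht
  exact hq_unique q' hq' (fun t ht => (hq'_eq t ht).trans (integral_smul _ _).symm) ht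

/-- **Existence and uniqueness for the abstract fatigue state equation.**
Setting: `E = L²(μ)` (`μ` finite), `F` a real Hilbert space, `ϵ > 0`, `T > 0`,
`B : E × F → E` bounded linear, `f : ℝ → ℝ` Lipschitz with constant `Lf` with Nemytskii
operator `fE` on `E`, and `H` a history operator mapping continuous trajectories to
continuous trajectories with the Volterra–Lipschitz property with constant `LH`.
For every strongly measurable `ℓ : (0,T) → F` with `∫₀ᵀ ‖ℓ‖² < ∞` there is a unique
continuous `q : [0,T] → E` with `q 0 = 0` and
`q t = (1/ϵ) ∫₀ᵗ (B(q s, ℓ s) − fE(H q s))⁺ ds` for all `t ∈ [0,T]`. -/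
theorem state_equation_exists_unique
    {α : Type*} [MeasurableSpace α] (μ : Measure α) [IsFiniteMeasure μ]
    {F : Type*} [NormedAddCommGroup F] [InnerProductSpace ℝ F] [CompleteSpace F]
    (ϵ T : ℝ) (hϵ : 0 < ϵ) (hT : 0 < T)
    (B : Lp ℝ 2 μ × F →L[ℝ] Lp ℝ 2 μ)
    (f : ℝ → ℝ) (Lf : ℝ) (hLf : 0 ≤ Lf)
    (hf : ∀ x y : ℝ, |f x - f y| ≤ Lf * |x - y|)
    (fE : Lp ℝ 2 μ → Lp ℝ 2 μ)
    (hfE : ∀ v : Lp ℝ 2 μ, (fE v : α → ℝ) =ᵐ[μ] fun x => f ((v : α → ℝ) x))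
    (H : (ℝ → Lp ℝ 2 μ) → (ℝ → Lp ℝ 2 μ)) (LH : ℝ) (hLH : 0 ≤ LH)
    (Hcont : ∀ q : ℝ → Lp ℝ 2 μ, ContinuousOn q (Icc 0 T) → ContinuousOn (H q) (Icc 0 T))
    (Hlip : ∀ q₁ q₂ : ℝ → Lp ℝ 2 μ, ContinuousOn q₁ (Icc 0 T) → ContinuousOn q₂ (Icc 0 T) →
      ∀ t ∈ Icc (0:ℝ) T,
        ‖H q₁ t - H q₂ t‖ ≤ LH * ∫ s in Ioc (0:ℝ) t, ‖q₁ s - q₂ s‖)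
    (ℓ : ℝ → F) (hℓ : MemLp ℓ 2 (volume.restrict (Ioc (0:ℝ) T))) :
    ∃ q : ℝ → Lp ℝ 2 μ,
      (ContinuousOn q (Icc 0 T) ∧ q 0 = 0 ∧
        ∀ t ∈ Icc (0:ℝ) T,
          q t = ϵ⁻¹ • ∫ s in Ioc (0:ℝ) t, ((B (q s, ℓ s) - fE (H q s)) ⊔ 0)) ∧
      ∀ q' : ℝ → Lp ℝ 2 μ,
        (ContinuousOn q' (Icc 0 T) ∧ q' 0 = 0 ∧
          ∀ t ∈ Icc (0:ℝ) T,
            q' t = ϵ⁻¹ • ∫ s in Ioc (0:ℝ) t, ((B (q' s, ℓ s) - fE (H q' s)) ⊔ 0)) →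
        ∀ t ∈ Icc (0:ℝ) T, q' t = q t :=
  state_equation_exists_unique_general μ ϵ T hT B f Lf hf fE hfE H LH hLH Hcont Hlip ℓ hℓ
end

section
/- In the setting of the abstract state equation, fix ℓ : (0,T) → F strongly measurable with ∫₀ᵀ ‖ℓ(s)‖²_F ds < ∞ and t ∈ (0,T], and define, for continuous η : [0,t] → E, 𝒢(η)(τ) := ∫₀^τ (B(η(s), ℓ(s)) − f(𝓗(η)(s)))⁺ ds for τ ∈ [0,t]. Let c denote the operator norm of the bounded linear map E ∋ v ↦ B(v, 0). Then for all continuous q₁, q₂ : [0,t] → E and all τ ∈ [0,t]: ‖𝒢(q₁)(τ) − 𝒢(q₂)(τ)‖_E ≤ (c·t^{1/2} + L_f·L_𝓗·t^{3/2}) · ( ∫₀ᵗ ‖q₁(s) − q₂(s)‖²_E ds )^{1/2}. -/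
/-!
Since `v ↦ v⁺` is 1-Lipschitz and `B(·, ℓ s)` is affine with linear part `c`, the two integrands
differ at time `s` by at most `c ‖q₁ s - q₂ s‖ + L_f L_𝓗 ∫₀ˢ ‖q₁ - q₂‖`. Integrating over `(0, τ]`
bounds the difference by `(c + L_f L_𝓗 t) ∫₀ᵗ ‖q₁ - q₂‖`, and Cauchy–Schwarz against the constant
`1` turns this `L¹` norm into `√t` times the `L²` norm.
-/

open MeasureTheory Filter Set

theorem MeasureTheory.Lp.norm_sub_le_of_ae_eq_comp {α E F : Type*} [MeasurableSpace α]
    {μ : Measure α} {p : ENNReal} [NormedAddCommGroup E] [NormedAddCommGroup F]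
    {g : E → F} {K : ℝ} (hg : ∀ x y, ‖g x - g y‖ ≤ K * ‖x - y‖)
    {N : Lp E p μ → Lp F p μ} (hN : ∀ v : Lp E p μ, (N v : α → F) =ᵐ[μ] fun x => g (v x))
    (u v : Lp E p μ) : ‖N u - N v‖ ≤ K * ‖u - v‖ := by
  refine Lp.norm_le_mul_norm_of_ae_le_mul ?_
  filter_upwards [hN u, hN v, Lp.coeFn_sub (N u) (N v), Lp.coeFn_sub u v]
    with x hu hv hNuv huv
  rw [hNuv, huv, Pi.sub_apply, Pi.sub_apply, hu, hv]
  exact hg _ _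

section SolidNorm

variable {E F : Type*} [NormedAddCommGroup E] [Lattice E] [HasSolidNorm E] [IsOrderedAddMonoid E]
  [NormedSpace ℝ E] [NormedAddCommGroup F] [NormedSpace ℝ F] (B : E × F →L[ℝ] E)

theorem norm_sup_zero_sub_sup_zero_map_prod_le (x₁ x₂ y₁ y₂ : E) (w : F) :
    ‖(B (x₁, w) - y₁) ⊔ 0 - (B (x₂, w) - y₂) ⊔ 0‖ ≤
      ‖B.comp (ContinuousLinearMap.inl ℝ E F)‖ * ‖x₁ - x₂‖ + ‖y₁ - y₂‖ := by
  have hB : B (x₁, w) - B (x₂, w) = B.comp (ContinuousLinearMap.inl ℝ E F) (x₁ - x₂) := by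
    rw [← map_sub]; simp
  calc ‖(B (x₁, w) - y₁) ⊔ 0 - (B (x₂, w) - y₂) ⊔ 0‖
      ≤ ‖(B (x₁, w) - y₁) - (B (x₂, w) - y₂)‖ := norm_sup_sub_sup_le_norm _ _ _
    _ = ‖B.comp (ContinuousLinearMap.inl ℝ E F) (x₁ - x₂) - (y₁ - y₂)‖ := by
      rw [← hB]; congr 1; abel
    _ ≤ _ := (norm_sub_le _ _).trans (by gcongr; exact ContinuousLinearMap.le_opNorm _ _)

theorem integrableOn_sup_zero_map_prod_sub {q y : ℝ → E} {ℓ : ℝ → F} {a b : ℝ}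
    (hq : ContinuousOn q (Icc a b)) (hy : ContinuousOn y (Icc a b))
    (hℓ : IntegrableOn ℓ (Ioc a b)) :
    IntegrableOn (fun s => (B (q s, ℓ s) - y s) ⊔ 0) (Ioc a b) := by
  have hq' : IntegrableOn q (Ioc a b) := (hq.integrableOn_Icc).mono_set Ioc_subset_Icc_self
  have hy' : IntegrableOn y (Ioc a b) := (hy.integrableOn_Icc).mono_set Ioc_subset_Icc_self
  exact ((B.integrable_comp (hq'.prodMk hℓ)).sub hy').sup (integrable_zero _ _ _)

end SolidNorm

theorem ContinuousOn.memLp_restrict_Ioc {E : Type*} [NormedAddCommGroup E] {f : ℝ → E}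
    {a b : ℝ} {p : ENNReal} (hf : ContinuousOn f (Icc a b)) :
    MemLp f p (volume.restrict (Ioc a b)) := by
  obtain ⟨M, hM⟩ := isCompact_Icc.exists_bound_of_continuousOn hf
  exact .of_bound ((hf.mono Ioc_subset_Icc_self).aestronglyMeasurable measurableSet_Ioc) M
    ((ae_restrict_iff' measurableSet_Ioc).2
      (ae_of_all _ fun s hs => hM s (Ioc_subset_Icc_self hs)))

theorem integral_le_sqrt_measureReal_mul_sqrt_integral_sq {α : Type*} [MeasurableSpace α]
    {μ : Measure α} [IsFiniteMeasure μ] {g : α → ℝ} (hg0 : 0 ≤ᵐ[μ] g) (hg : MemLp g 2 μ) :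
    ∫ x, g x ∂μ ≤ √(μ.real univ) * √(∫ x, g x ^ 2 ∂μ) := by
  have h := integral_mul_le_Lp_mul_Lq_of_nonneg Real.HolderConjugate.two_two hg0
    (ae_of_all _ fun _ => zero_le_one) (by simpa using hg) (by simpa using memLp_const (1 : ℝ))
  simp only [one_pow, mul_one, integral_const, smul_eq_mul, Real.rpow_two] at h
  rw [Real.sqrt_eq_rpow, Real.sqrt_eq_rpow, mul_comm]
  exact h

theorem norm_setIntegral_Ioc_le_of_norm_le_volterra {E : Type*} [NormedAddCommGroup E]
    [NormedSpace ℝ E] {g : ℝ → E} {Δ : ℝ → ℝ} {c K τ t : ℝ} (hΔ : IntegrableOn Δ (Ioc 0 t))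
    (hΔ0 : ∀ s, 0 ≤ Δ s) (hc : 0 ≤ c) (hK : 0 ≤ K) (hτ : τ ∈ Icc 0 t)
    (hg : ∀ s ∈ Ioc 0 τ, ‖g s‖ ≤ c * Δ s + K * ∫ r in Ioc 0 s, Δ r) :
    ‖∫ s in Ioc 0 τ, g s‖ ≤ (c + K * t) * ∫ s in Ioc 0 t, Δ s := by
  set I := ∫ s in Ioc 0 t, Δ s
  have hmono : ∀ s ≤ t, ∫ r in Ioc 0 s, Δ r ≤ I := fun s hs =>
    setIntegral_mono_set hΔ (ae_of_all _ hΔ0) (Ioc_subset_Ioc_right hs).eventuallyLE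
  have hΔτ : IntegrableOn Δ (Ioc 0 τ) := hΔ.mono_set (Ioc_subset_Ioc_right hτ.2)
  have hbound : IntegrableOn (fun s => c * Δ s + K * I) (Ioc 0 τ) :=
    (hΔτ.const_mul c).add (integrableOn_const (by simp))
  calc ‖∫ s in Ioc 0 τ, g s‖ ≤ ∫ s in Ioc 0 τ, (c * Δ s + K * I) := by
        refine norm_integral_le_of_norm_le hbound ((ae_restrict_iff' measurableSet_Ioc).2
          (ae_of_all _ fun s hs => (hg s hs).trans ?_))
        gcongr
        exact hmono s (hs.2.trans hτ.2)
    _ = c * (∫ s in Ioc 0 τ, Δ s) + K * I * τ := by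
        rw [integral_add (hΔτ.const_mul c) (integrableOn_const (by simp)), integral_const_mul,
          setIntegral_const, smul_eq_mul, Real.volume_real_Ioc_of_le hτ.1, sub_zero, mul_comm τ]
    _ ≤ c * I + K * I * t := by
        have hI : 0 ≤ I := setIntegral_nonneg measurableSet_Ioc fun s _ => hΔ0 s
        gcongr
        · exact hmono τ hτ.2
        · exact hτ.2
    _ = (c + K * t) * I := by ring

theorem fixed_point_map_contraction_estimate_general
    {α : Type*} [MeasurableSpace α] (μ : Measure α)
    {F : Type*} [NormedAddCommGroup F] [InnerProductSpace ℝ F]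
    (T : ℝ)
    (B : Lp ℝ 2 μ × F →L[ℝ] Lp ℝ 2 μ)
    (f : ℝ → ℝ) (Lf : ℝ) (hLf : 0 ≤ Lf)
    (hf : ∀ x y : ℝ, |f x - f y| ≤ Lf * |x - y|)
    (fE : Lp ℝ 2 μ → Lp ℝ 2 μ)
    (hfE : ∀ v : Lp ℝ 2 μ, (fE v : α → ℝ) =ᵐ[μ] fun x => f ((v : α → ℝ) x))
    (H : (ℝ → Lp ℝ 2 μ) → (ℝ → Lp ℝ 2 μ)) (LH : ℝ) (hLH : 0 ≤ LH)
    (Hcont : ∀ q : ℝ → Lp ℝ 2 μ, ContinuousOn q (Icc 0 T) → ContinuousOn (H q) (Icc 0 T))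
    (Hlip : ∀ q₁ q₂ : ℝ → Lp ℝ 2 μ, ContinuousOn q₁ (Icc 0 T) → ContinuousOn q₂ (Icc 0 T) →
      ∀ t ∈ Icc (0:ℝ) T,
        ‖H q₁ t - H q₂ t‖ ≤ LH * ∫ s in Ioc (0:ℝ) t, ‖q₁ s - q₂ s‖)
    (ℓ : ℝ → F) (hℓ : MemLp ℓ 2 (volume.restrict (Ioc (0:ℝ) T)))
    (t : ℝ) (ht : t ∈ Ioc (0:ℝ) T) :
    ∀ q₁ q₂ : ℝ → Lp ℝ 2 μ, ContinuousOn q₁ (Icc 0 T) → ContinuousOn q₂ (Icc 0 T) →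
      ∀ τ ∈ Icc (0:ℝ) t,
        ‖(∫ s in Ioc (0:ℝ) τ, ((B (q₁ s, ℓ s) - fE (H q₁ s)) ⊔ 0)) -
            ∫ s in Ioc (0:ℝ) τ, ((B (q₂ s, ℓ s) - fE (H q₂ s)) ⊔ 0)‖ ≤
          (‖B.comp (ContinuousLinearMap.inl ℝ (Lp ℝ 2 μ) F)‖ * Real.sqrt t +
              Lf * LH * (t * Real.sqrt t)) *
            Real.sqrt (∫ s in Ioc (0:ℝ) t, ‖q₁ s - q₂ s‖ ^ 2) := by
  intro q₁ q₂ hq₁ hq₂ τ hτ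
  have hτT : Icc 0 τ ⊆ Icc 0 T := Icc_subset_Icc_right (hτ.2.trans ht.2)
  have hfE_lip : ∀ u v, ‖fE u - fE v‖ ≤ Lf * ‖u - v‖ :=
    Lp.norm_sub_le_of_ae_eq_comp (fun x y => by simpa only [Real.norm_eq_abs] using hf x y) hfE
  have hfE_cont : Continuous fE :=
    (LipschitzWith.of_dist_le' fun u v => by simpa only [dist_eq_norm] using hfE_lip u v).continuous
  have hint : ∀ q, ContinuousOn q (Icc 0 T) →
      IntegrableOn (fun s => (B (q s, ℓ s) - fE (H q s)) ⊔ 0) (Ioc 0 τ) := fun q hq =>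
    integrableOn_sup_zero_map_prod_sub B (hq.mono hτT)
      ((hfE_cont.comp_continuousOn (Hcont q hq)).mono hτT)
      (IntegrableOn.mono_set (hℓ.integrable one_le_two) (Ioc_subset_Ioc_right (hτ.2.trans ht.2)))
  have hΔL2 : MemLp (fun s => ‖q₁ s - q₂ s‖) 2 (volume.restrict (Ioc 0 t)) :=
    ((hq₁.sub hq₂).norm.mono (Icc_subset_Icc_right ht.2)).memLp_restrict_Ioc
  rw [← integral_sub (hint q₁ hq₁) (hint q₂ hq₂)]
  calc _ ≤ (‖B.comp (ContinuousLinearMap.inl ℝ (Lp ℝ 2 μ) F)‖ + Lf * LH * t) *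
        ∫ s in Ioc 0 t, ‖q₁ s - q₂ s‖ := by
        refine norm_setIntegral_Ioc_le_of_norm_le_volterra (hΔL2.integrable one_le_two)
          (fun s => norm_nonneg _) (norm_nonneg _) (by positivity) hτ fun s hs => ?_
        have hH := Hlip q₁ q₂ hq₁ hq₂ s ⟨hs.1.le, hs.2.trans (hτ.2.trans ht.2)⟩
        refine (norm_sup_zero_sub_sup_zero_map_prod_le B _ _ _ _ _).trans ?_
        rw [mul_assoc Lf]
        gcongr
        exact (hfE_lip _ _).trans (by gcongr)
    _ ≤ (‖B.comp (ContinuousLinearMap.inl ℝ (Lp ℝ 2 μ) F)‖ + Lf * LH * t) *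
        (√t * √(∫ s in Ioc 0 t, ‖q₁ s - q₂ s‖ ^ 2)) := by
        have hLfLH : 0 ≤ Lf * LH * t := mul_nonneg (mul_nonneg hLf hLH) ht.1.le
        refine mul_le_mul_of_nonneg_left ?_ (add_nonneg (norm_nonneg _) hLfLH)
        simpa [Real.volume_real_Ioc_of_le ht.1.le] using
          integral_le_sqrt_measureReal_mul_sqrt_integral_sq
            (ae_of_all _ fun s => norm_nonneg _) hΔL2
    _ = _ := by ring

/-- **Contraction estimate for the fixed-point map `𝒢` of the abstract state equation.**
With `𝒢(η)(τ) = ∫₀^τ (B(η s, ℓ s) − fE(H η s))⁺ ds` and `c` the operator norm of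
`v ↦ B(v,0)`, one has, for all continuous `q₁, q₂` and all `τ ∈ [0,t]`,
`‖𝒢(q₁)(τ) − 𝒢(q₂)(τ)‖ ≤ (c·√t + Lf·LH·t^{3/2}) · ‖q₁ − q₂‖_{L²(0,t;E)}`. -/
theorem fixed_point_map_contraction_estimate
    {α : Type*} [MeasurableSpace α] (μ : Measure α) [IsFiniteMeasure μ]
    {F : Type*} [NormedAddCommGroup F] [InnerProductSpace ℝ F] [CompleteSpace F]
    (ϵ T : ℝ) (hϵ : 0 < ϵ) (hT : 0 < T)
    (B : Lp ℝ 2 μ × F →L[ℝ] Lp ℝ 2 μ)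
    (f : ℝ → ℝ) (Lf : ℝ) (hLf : 0 ≤ Lf)
    (hf : ∀ x y : ℝ, |f x - f y| ≤ Lf * |x - y|)
    (fE : Lp ℝ 2 μ → Lp ℝ 2 μ)
    (hfE : ∀ v : Lp ℝ 2 μ, (fE v : α → ℝ) =ᵐ[μ] fun x => f ((v : α → ℝ) x))
    (H : (ℝ → Lp ℝ 2 μ) → (ℝ → Lp ℝ 2 μ)) (LH : ℝ) (hLH : 0 ≤ LH)
    (Hcont : ∀ q : ℝ → Lp ℝ 2 μ, ContinuousOn q (Icc 0 T) → ContinuousOn (H q) (Icc 0 T))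
    (Hlip : ∀ q₁ q₂ : ℝ → Lp ℝ 2 μ, ContinuousOn q₁ (Icc 0 T) → ContinuousOn q₂ (Icc 0 T) →
      ∀ t ∈ Icc (0:ℝ) T,
        ‖H q₁ t - H q₂ t‖ ≤ LH * ∫ s in Ioc (0:ℝ) t, ‖q₁ s - q₂ s‖)
    (ℓ : ℝ → F) (hℓ : MemLp ℓ 2 (volume.restrict (Ioc (0:ℝ) T)))
    (t : ℝ) (ht : t ∈ Ioc (0:ℝ) T) :
    ∀ q₁ q₂ : ℝ → Lp ℝ 2 μ, ContinuousOn q₁ (Icc 0 T) → ContinuousOn q₂ (Icc 0 T) →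
      ∀ τ ∈ Icc (0:ℝ) t,
        ‖(∫ s in Ioc (0:ℝ) τ, ((B (q₁ s, ℓ s) - fE (H q₁ s)) ⊔ 0)) -
            ∫ s in Ioc (0:ℝ) τ, ((B (q₂ s, ℓ s) - fE (H q₂ s)) ⊔ 0)‖ ≤
          (‖B.comp (ContinuousLinearMap.inl ℝ (Lp ℝ 2 μ) F)‖ * Real.sqrt t +
              Lf * LH * (t * Real.sqrt t)) *
            Real.sqrt (∫ s in Ioc (0:ℝ) t, ‖q₁ s - q₂ s‖ ^ 2) :=
  fixed_point_map_contraction_estimate_general μ T B f Lf hLf hf fE hfE H LH hLH Hcont Hlip ℓ hℓ t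
    ht
end

section
/- Let E be a real Hilbert space, T > 0, K ≥ 0, and let H := L²((0,T); E) be the Hilbert space of (equivalence classes of) square-integrable E-valued functions on (0,T). Let A : H → H be a bounded linear operator such that for every δ ∈ H: ‖(Aδ)(t)‖_E ≤ K ∫₀ᵗ ‖δ(s)‖_E ds for a.e. t ∈ (0,T). Then the Hilbert-space adjoint A* satisfies: for every δ ∈ H, ‖(A*δ)(t)‖_E ≤ K ∫ₜ^T ‖δ(s)‖_E ds for a.e. t ∈ (0,T). -/
open MeasureTheory Filter Set

/-!
Write `g = A* δ` and `h s = K ∫_{t ≥ s} ‖δ t‖`. For every test function `F`,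
`⟪g, F⟫ = ⟪δ, A F⟫ ≤ K ∫ ‖δ t‖ ∫_{s ≤ t} ‖F s‖`, and exchanging the order of integration turns
the right-hand side into `∫ ‖F s‖ h s`. Taking for `F` the restriction of `g` to an arbitrary
measurable set `S` gives `∫_S ‖g‖ (h - ‖g‖) ≥ 0`, hence `‖g‖ ≤ h` almost everywhere.
-/

section Volterra

variable {α : Type*} [LinearOrder α] [TopologicalSpace α] [OrderClosedTopology α]
  [MeasurableSpace α] [OpensMeasurableSpace α] {μ : Measure α} {f u : α → ℝ}

lemma integral_indicator_Iic_mul (t : α) :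
    ∫ s, (Iic t).indicator (fun s => f t * u s) s ∂μ = f t * ∫ s in Iic t, u s ∂μ := by
  rw [integral_indicator measurableSet_Iic, integral_const_mul]

lemma integral_indicator_Iic_mul_swap (s : α) :
    ∫ t, (Iic t).indicator (fun s => f t * u s) s ∂μ = u s * ∫ t in Ici s, f t ∂μ := by
  have hswap (t : α) :
      (Iic t).indicator (fun s => f t * u s) s = (Ici s).indicator (fun t => u s * f t) t := by
    simp only [indicator_apply, mem_Iic, mem_Ici, mul_comm]
  simp only [hswap]
  rw [integral_indicator measurableSet_Ici, integral_const_mul]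

variable [SecondCountableTopology α]

lemma integrable_uncurry_indicator_Iic_mul (hf : Integrable f μ) (hu : Integrable u μ) :
    Integrable (Function.uncurry fun t s => (Iic t).indicator (fun s => f t * u s) s)
      (μ.prod μ) := by
  refine ((hf.mul_prod hu).indicator (measurableSet_le measurable_snd measurable_fst)).congr
    (Eventually.of_forall fun ⟨t, s⟩ => ?_)
  simp only [Function.uncurry_apply_pair, indicator_apply, mem_Iic, mem_ofPred_eq]

variable [SFinite μ]

lemma integrable_mul_setIntegral_Iic (hf : Integrable f μ) (hu : Integrable u μ) :
    Integrable (fun t => f t * ∫ s in Iic t, u s ∂μ) μ := by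
  simpa only [Function.uncurry_apply_pair, integral_indicator_Iic_mul] using
    (integrable_uncurry_indicator_Iic_mul hf hu).integral_prod_left

lemma integrable_mul_setIntegral_Ici (hf : Integrable f μ) (hu : Integrable u μ) :
    Integrable (fun t => f t * ∫ s in Ici t, u s ∂μ) μ := by
  simpa only [Function.uncurry_apply_pair, integral_indicator_Iic_mul_swap] using
    (integrable_uncurry_indicator_Iic_mul hu hf).integral_prod_right

lemma integral_mul_setIntegral_Iic (hf : Integrable f μ) (hu : Integrable u μ) :
    ∫ t, f t * ∫ s in Iic t, u s ∂μ ∂μ = ∫ s, u s * ∫ t in Ici s, f t ∂μ ∂μ := by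
  simpa only [integral_indicator_Iic_mul, integral_indicator_Iic_mul_swap] using
    integral_integral_swap (integrable_uncurry_indicator_Iic_mul hf hu)

end Volterra

section L2

variable {α E : Type*} [MeasurableSpace α] {μ : Measure α}
  [NormedAddCommGroup E] [InnerProductSpace ℝ E]

lemma ae_norm_le_of_forall_inner_le {g : Lp E 2 μ} {h : α → ℝ} (h_nonneg : 0 ≤ᵐ[μ] h)
    (hgh : Integrable (fun t => ‖g t‖ * h t) μ)
    (hle : ∀ F : Lp E 2 μ, inner ℝ g F ≤ ∫ t, ‖F t‖ * h t ∂μ) :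
    ∀ᵐ t ∂μ, ‖g t‖ ≤ h t := by
  have hg2 : Integrable (fun t => ‖g t‖ ^ 2) μ :=
    (Lp.memLp g).integrable_norm_pow two_ne_zero
  have hkey : 0 ≤ᵐ[μ] fun t => ‖g t‖ * (h t - ‖g t‖) := by
    refine ae_nonneg_of_forall_setIntegral_nonneg
      ((hgh.sub hg2).congr (.of_forall fun t => by simp only [Pi.sub_apply]; ring))
      fun S hS _ => ?_
    set F : Lp E 2 μ := ((Lp.memLp g).indicator hS).toLp _
    have hF : F =ᵐ[μ] S.indicator g := ((Lp.memLp g).indicator hS).coeFn_toLp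
    have hinner : inner ℝ g F = ∫ t in S, ‖g t‖ ^ 2 ∂μ := by
      rw [L2.inner_def, ← integral_indicator hS]
      refine integral_congr_ae ?_
      filter_upwards [hF] with t ht
      by_cases hts : t ∈ S <;> simp [ht, hts]
    have hbound : ∫ t, ‖F t‖ * h t ∂μ = ∫ t in S, ‖g t‖ * h t ∂μ := by
      rw [← integral_indicator hS]
      refine integral_congr_ae ?_
      filter_upwards [hF] with t ht
      by_cases hts : t ∈ S <;> simp [ht, hts]
    have hgF := hle F
    rw [hinner, hbound] at hgF
    simp only [mul_sub, ← sq]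
    rw [integral_sub hgh.integrableOn hg2.integrableOn]
    linarith
  filter_upwards [hkey, h_nonneg] with t hprod hh
  rcases (norm_nonneg (g t)).eq_or_lt with hg0 | hgpos
  · rw [← hg0]; exact hh
  · exact sub_nonneg.mp (nonneg_of_mul_nonneg_right hprod hgpos)

end L2

section Restrict

variable {α : Type*} [LinearOrder α] [TopologicalSpace α] [OrderClosedTopology α]
  [MeasurableSpace α] [OpensMeasurableSpace α] {μ : Measure α} {a b t : α}

lemma restrict_Ioc_restrict_Iic (h : t ≤ b) :
    (μ.restrict (Ioc a b)).restrict (Iic t) = μ.restrict (Ioc a t) := by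
  rw [Measure.restrict_restrict measurableSet_Iic, Iic_inter_Ioc_of_le h]

lemma restrict_Ioc_restrict_Ici [NullSingletonClass μ] (h : a ≤ t) :
    (μ.restrict (Ioc a b)).restrict (Ici t) = μ.restrict (Ioc t b) := by
  rw [← Measure.restrict_congr_set Ioi_ae_eq_Ici, Measure.restrict_restrict measurableSet_Ioi,
    inter_comm, Ioc_inter_Ioi, max_eq_right h]

end Restrict

theorem ae_norm_adjoint_apply_le_setIntegral_Ici {α E : Type*} [LinearOrder α]
    [TopologicalSpace α] [OrderClosedTopology α] [SecondCountableTopology α]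
    [MeasurableSpace α] [OpensMeasurableSpace α] {μ : Measure α} [IsFiniteMeasure μ]
    [NormedAddCommGroup E] [InnerProductSpace ℝ E] [CompleteSpace E] {K : ℝ} (hK : 0 ≤ K)
    (A : Lp E 2 μ →L[ℝ] Lp E 2 μ)
    (hA : ∀ δ : Lp E 2 μ, ∀ᵐ t ∂μ, ‖A δ t‖ ≤ K * ∫ s in Iic t, ‖δ s‖ ∂μ) (δ : Lp E 2 μ) :
    ∀ᵐ t ∂μ, ‖ContinuousLinearMap.adjoint A δ t‖ ≤ K * ∫ s in Ici t, ‖δ s‖ ∂μ := by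
  have hint (f : Lp E 2 μ) : Integrable (fun t => ‖f t‖) μ :=
    ((Lp.memLp f).integrable one_le_two).norm
  refine ae_norm_le_of_forall_inner_le
    (.of_forall fun t => mul_nonneg hK (integral_nonneg fun _ => norm_nonneg _))
    (by simpa only [mul_left_comm] using
      (integrable_mul_setIntegral_Ici (hint _) (hint δ)).const_mul K) fun F => ?_
  calc inner ℝ (ContinuousLinearMap.adjoint A δ) F
      = inner ℝ δ (A F) := ContinuousLinearMap.adjoint_inner_left A F δ
    _ = ∫ t, inner ℝ (δ t) (A F t) ∂μ := L2.inner_def δ (A F)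
    _ ≤ ∫ t, K * (‖δ t‖ * ∫ s in Iic t, ‖F s‖ ∂μ) ∂μ := by
      refine integral_mono_ae (L2.integrable_inner δ (A F))
        ((integrable_mul_setIntegral_Iic (hint δ) (hint F)).const_mul K) ?_
      filter_upwards [hA F] with t ht
      calc inner ℝ (δ t) (A F t) ≤ ‖δ t‖ * ‖A F t‖ := real_inner_le_norm _ _
        _ ≤ ‖δ t‖ * (K * ∫ s in Iic t, ‖F s‖ ∂μ) := by gcongr
        _ = K * (‖δ t‖ * ∫ s in Iic t, ‖F s‖ ∂μ) := mul_left_comm _ _ _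
    _ = ∫ s, ‖F s‖ * (K * ∫ t in Ici s, ‖δ t‖ ∂μ) ∂μ := by
      rw [integral_const_mul, integral_mul_setIntegral_Iic (hint δ) (hint F),
        ← integral_const_mul]
      simp only [mul_left_comm]

theorem adjoint_volterra_bound_general
    {E : Type*} [NormedAddCommGroup E] [InnerProductSpace ℝ E] [CompleteSpace E]
    (T K : ℝ) (hK : 0 ≤ K)
    (A : Lp E 2 (volume.restrict (Ioc (0:ℝ) T)) →L[ℝ] Lp E 2 (volume.restrict (Ioc (0:ℝ) T)))
    (hA : ∀ δ : Lp E 2 (volume.restrict (Ioc (0:ℝ) T)),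
      ∀ᵐ t ∂(volume.restrict (Ioc (0:ℝ) T)),
        ‖(A δ : ℝ → E) t‖ ≤ K * ∫ s in Ioc (0:ℝ) t, ‖(δ : ℝ → E) s‖) :
    ∀ δ : Lp E 2 (volume.restrict (Ioc (0:ℝ) T)),
      ∀ᵐ t ∂(volume.restrict (Ioc (0:ℝ) T)),
        ‖(ContinuousLinearMap.adjoint A δ : ℝ → E) t‖ ≤ K * ∫ s in Ioc t T, ‖(δ : ℝ → E) s‖ := by
  intro δ
  have : IsFiniteMeasure (volume.restrict (Ioc (0:ℝ) T)) :=
    isFiniteMeasure_restrict.2 measure_Ioc_lt_top.ne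
  have hmem : ∀ᵐ t ∂(volume.restrict (Ioc (0:ℝ) T)), t ∈ Ioc 0 T :=
    ae_restrict_mem measurableSet_Ioc
  have hA_Iic (δ : Lp E 2 (volume.restrict (Ioc (0:ℝ) T))) :
      ∀ᵐ t ∂(volume.restrict (Ioc (0:ℝ) T)), ‖(A δ : ℝ → E) t‖ ≤
        K * ∫ s in Iic t, ‖(δ : ℝ → E) s‖ ∂(volume.restrict (Ioc (0:ℝ) T)) := by
    filter_upwards [hA δ, hmem] with t ht htT
    rwa [restrict_Ioc_restrict_Iic htT.2]
  filter_upwards [ae_norm_adjoint_apply_le_setIntegral_Ici hK A hA_Iic δ, hmem] with t ht htT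
  rwa [restrict_Ioc_restrict_Ici htT.1.le] at ht

/-- **Adjoint of a Volterra-type operator on `L²((0,T);E)` satisfies the reversed
Volterra bound.**  If `‖(Aδ)(t)‖ ≤ K ∫₀ᵗ ‖δ(s)‖ ds` a.e. for every `δ`, then
`‖(A*δ)(t)‖ ≤ K ∫ₜᵀ ‖δ(s)‖ ds` a.e. for every `δ`. -/
theorem adjoint_volterra_bound
    {E : Type*} [NormedAddCommGroup E] [InnerProductSpace ℝ E] [CompleteSpace E]
    (T K : ℝ) (hT : 0 < T) (hK : 0 ≤ K)
    (A : Lp E 2 (volume.restrict (Ioc (0:ℝ) T)) →L[ℝ] Lp E 2 (volume.restrict (Ioc (0:ℝ) T)))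
    (hA : ∀ δ : Lp E 2 (volume.restrict (Ioc (0:ℝ) T)),
      ∀ᵐ t ∂(volume.restrict (Ioc (0:ℝ) T)),
        ‖(A δ : ℝ → E) t‖ ≤ K * ∫ s in Ioc (0:ℝ) t, ‖(δ : ℝ → E) s‖) :
    ∀ δ : Lp E 2 (volume.restrict (Ioc (0:ℝ) T)),
      ∀ᵐ t ∂(volume.restrict (Ioc (0:ℝ) T)),
        ‖(ContinuousLinearMap.adjoint A δ : ℝ → E) t‖ ≤ K * ∫ s in Ioc t T, ‖(δ : ℝ → E) s‖ :=
  adjoint_volterra_bound_general T K hK A hA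
end

section
/- Let V be a real Hilbert space, W a real normed space, ι : V → W a compact linear operator, and F : W → ℝ a continuous function that is bounded from below. Then the functional G : V → ℝ, G(v) := F(ι v) + (1/2)‖v‖²_V, attains a global minimum: there exists v̄ ∈ V with G(v̄) ≤ G(v) for all v ∈ V. -/
/-! Pass to the weak topology of `V`. Closed balls of a Hilbert space are weakly compact (Riesz
representation and Banach–Alaoglu), and the norm is weakly lower semicontinuous because closed
balls are convex. A compact operator is weak-to-norm continuous on bounded sets: it maps them into
a norm-compact set, on which the norm topology and the (Hausdorff, coarser) weak topology agree.
Hence `G` is weakly lower semicontinuous on every closed ball and attains its minimum there; since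
`F` is bounded below, `G` exceeds `G 0` outside a large enough ball. -/

open Metric Set Topology

theorem ContinuousOn.of_comp_of_mapsTo_isCompact {X Y Z : Type*} [TopologicalSpace X]
    [TopologicalSpace Y] [TopologicalSpace Z] [T2Space Y] {f : X → Z} {e : Z → Y}
    {s : Set X} {C : Set Z} (hC : IsCompact C) (he : Continuous e) (he_inj : e.Injective)
    (hfs : MapsTo f s C) (hef : ContinuousOn (e ∘ f) s) : ContinuousOn f s := by
  have : CompactSpace C := isCompact_iff_compactSpace.mp hC
  have hemb : IsEmbedding (e ∘ ((↑) : C → Z)) :=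
    (he.comp continuous_subtype_val).isClosedEmbedding
      (he_inj.comp Subtype.val_injective) |>.isEmbedding
  rw [continuousOn_iff_continuous_domRestrict] at hef ⊢
  exact continuous_subtype_val.comp <| (hemb.continuous_iff (f := hfs.restrict f s C)).mpr hef

section Normed

variable {𝕜 E F : Type*} [RCLike 𝕜] [NormedAddCommGroup E] [NormedSpace 𝕜 E]
  [NormedAddCommGroup F] [NormedSpace 𝕜 F]

theorem isClosed_toWeakSpace_closedBall (x : E) (r : ℝ) :
    IsClosed (toWeakSpace 𝕜 E '' closedBall x r) := by
  let _ : NormedSpace ℝ E := NormedSpace.restrictScalars ℝ 𝕜 E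
  have h := (convex_closedBall x r).toWeakSpace_closure (𝕜 := 𝕜)
  rw [isClosed_closedBall.closure_eq] at h
  exact h ▸ isClosed_closure

theorem lowerSemicontinuous_norm_toWeakSpace_symm :
    LowerSemicontinuous fun x : WeakSpace 𝕜 E => ‖(toWeakSpace 𝕜 E).symm x‖ := by
  refine lowerSemicontinuous_iff_isClosed_preimage.mpr fun r => ?_
  convert isClosed_toWeakSpace_closedBall (𝕜 := 𝕜) (0 : E) r using 1
  ext x
  simp [LinearEquiv.image_eq_preimage_symm]

theorem IsCompactOperator.continuousOn_toWeakSpace_symm {T : E →L[𝕜] F}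
    (hT : IsCompactOperator T) {s : Set E} (hs : Bornology.IsBounded s) :
    ContinuousOn (fun x : WeakSpace 𝕜 E => T ((toWeakSpace 𝕜 E).symm x))
      (toWeakSpace 𝕜 E '' s) := by
  obtain ⟨K, hK, hTK⟩ :=
    IsCompactOperator.image_subset_compact_of_bounded (f := (T : E →ₗ[𝕜] F)) hT hs
  refine .of_comp_of_mapsTo_isCompact hK (toWeakSpaceCLM 𝕜 F).continuous
    toWeakSpaceCLM_bijective.injective ?_ (WeakSpace.map T).continuous.continuousOn
  rintro _ ⟨x, hx, rfl⟩
  exact hTK ⟨x, hx, rfl⟩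

end Normed

section Hilbert

variable {𝕜 E F : Type*} [RCLike 𝕜] [NormedAddCommGroup E] [InnerProductSpace 𝕜 E]
  [CompleteSpace E] [NormedAddCommGroup F] [NormedSpace 𝕜 F]

namespace InnerProductSpace

theorem continuous_toWeakSpace_toDual_symm :
    Continuous fun f : WeakDual 𝕜 E =>
      toWeakSpace 𝕜 E ((toDual 𝕜 E).symm (WeakDual.toStrongDual f)) := by
  refine WeakBilin.continuous_of_continuous_eval _ fun y => ?_
  have hy : ∀ f : WeakDual 𝕜 E, y ((toDual 𝕜 E).symm (WeakDual.toStrongDual f))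
      = starRingEnd 𝕜 (f ((toDual 𝕜 E).symm y)) := fun f => by
    rw [← toDual_symm_apply, ← inner_conj_symm, toDual_symm_apply]
    rfl
  change Continuous fun f : WeakDual 𝕜 E => y ((toDual 𝕜 E).symm (WeakDual.toStrongDual f))
  simp_rw [hy]
  exact RCLike.continuous_conj.comp (WeakDual.eval_continuous _)

theorem isCompact_toWeakSpace_closedBall (x : E) (r : ℝ) :
    IsCompact (toWeakSpace 𝕜 E '' closedBall x r) := by
  convert (WeakDual.isCompact_closedBall (toDual 𝕜 E x) r).image
    continuous_toWeakSpace_toDual_symm using 1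
  ext v
  constructor
  · rintro ⟨y, hy, rfl⟩
    refine ⟨StrongDual.toWeakDual (toDual 𝕜 E y), ?_, by simp⟩
    simpa using hy
  · rintro ⟨f, hf, rfl⟩
    refine ⟨_, ?_, rfl⟩
    rw [mem_closedBall, ← (toDual 𝕜 E).dist_map]
    simpa using hf

end InnerProductSpace

theorem IsCompactOperator.exists_isMinOn_closedBall {T : E →L[𝕜] F} (hT : IsCompactOperator T)
    {Φ : F → ℝ} (hΦ : Continuous Φ) (x : E) {r : ℝ} (hr : 0 ≤ r) :
    ∃ v ∈ closedBall x r,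
      IsMinOn (fun v => Φ (T v) + 1 / 2 * ‖v‖ ^ 2) (closedBall x r) v := by
  have hsq : LowerSemicontinuous fun y : WeakSpace 𝕜 E =>
      1 / 2 * ‖(toWeakSpace 𝕜 E).symm y‖ ^ 2 := by
    -- `t ↦ t ^ 2 / 2` is monotone only on `t ≥ 0`
    have hq : Continuous fun t : ℝ => 1 / 2 * max t 0 ^ 2 := by fun_prop
    have h := hq.comp_lowerSemicontinuous
      (lowerSemicontinuous_norm_toWeakSpace_symm (𝕜 := 𝕜) (E := E))
      (fun _ _ h => by dsimp only; gcongr)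
    simpa [Function.comp_def] using h
  have hG : LowerSemicontinuousOn
      (fun y : WeakSpace 𝕜 E =>
        Φ (T ((toWeakSpace 𝕜 E).symm y)) + 1 / 2 * ‖(toWeakSpace 𝕜 E).symm y‖ ^ 2)
      (toWeakSpace 𝕜 E '' closedBall x r) :=
    (hΦ.comp_continuousOn (hT.continuousOn_toWeakSpace_symm isBounded_closedBall)
      ).lowerSemicontinuousOn.add (hsq.lowerSemicontinuousOn _)
  obtain ⟨_, ⟨v, hv, rfl⟩, hmin⟩ := hG.exists_isMinOn ((nonempty_closedBall.2 hr).image _)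
    (InnerProductSpace.isCompact_toWeakSpace_closedBall x r)
  exact ⟨v, hv, fun w hw => hmin ⟨w, hw, rfl⟩⟩

end Hilbert

/-- **Existence of a global minimizer for a Tikhonov-type functional composed with a
compact operator.**  Let `V` be a real Hilbert space, `W` a real normed space,
`ι : V → W` a compact linear operator and `F : W → ℝ` continuous and bounded below.
Then `G(v) = F(ι v) + ½‖v‖²` attains a global minimum on `V`. -/
theorem exists_global_min_of_compact_composition
    {V W : Type*} [NormedAddCommGroup V] [InnerProductSpace ℝ V] [CompleteSpace V]
    [NormedAddCommGroup W] [NormedSpace ℝ W]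
    (ι : V →L[ℝ] W) (hι : IsCompactOperator ι)
    (F : W → ℝ) (hF : Continuous F) (hbdd : BddBelow (Set.range F)) :
    ∃ vmin : V, ∀ v : V,
      F (ι vmin) + (1 / 2) * ‖vmin‖ ^ 2 ≤ F (ι v) + (1 / 2) * ‖v‖ ^ 2 := by
  obtain ⟨b, hb⟩ := hbdd
  -- `b + R ^ 2 / 2 = G 0`, so `G v > G 0` whenever `‖v‖ > R`
  set R := √(2 * (F (ι 0) - b))
  have hR : R ^ 2 = 2 * (F (ι 0) - b) := Real.sq_sqrt (by linarith [hb ⟨ι 0, rfl⟩])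
  obtain ⟨vmin, -, hmin⟩ := hι.exists_isMinOn_closedBall hF 0 (Real.sqrt_nonneg _)
  refine ⟨vmin, fun v => ?_⟩
  rcases le_or_gt ‖v‖ R with hv | hv
  · exact hmin (mem_closedBall_zero_iff.2 hv)
  · have h0 : F (ι vmin) + 1 / 2 * ‖vmin‖ ^ 2 ≤ F (ι 0) + 1 / 2 * ‖(0 : V)‖ ^ 2 :=
      hmin (mem_closedBall_self (Real.sqrt_nonneg _))
    have hvR : R ^ 2 < ‖v‖ ^ 2 := by gcongr
    have hbv : b ≤ F (ι v) := hb ⟨ι v, rfl⟩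
    simp only [norm_zero] at h0
    nlinarith
end

section
/- Let V be a real Hilbert space, W a real normed space, ι : V → W a compact linear operator, and F : W → ℝ continuous. For each ε > 0 let F_ε : W → ℝ be continuous, and assume the continuous convergence property: F_ε(w_ε) → F(w) whenever w_ε → w in W as ε ↓ 0. Let x̄ ∈ V be a local minimizer of G(v) := F(ι v) + (1/2)‖v‖²_V with radius ρ > 0 (i.e., G(x̄) ≤ G(v) for all v with ‖v − x̄‖_V ≤ ρ). Then: (i) for each ε > 0 the penalized functional G_ε(v) := F_ε(ι v) + (1/2)‖v‖²_V + (1/2)‖v − x̄‖²_V attains a global minimum over the closed ball B_V(x̄, ρ) at some v_ε; and (ii) every such family satisfies v_ε → x̄ strongly in V as ε ↓ 0; in particular, for all sufficiently small ε, v_ε is a local minimizer of G_ε on V. -/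
/-!
Along an ultrafilter, a family `vε` in `closedBall x ρ` has a weak limit `y` (Banach–Alaoglu in
the dual plus the Riesz representation); the compact operator `ι` makes `ι vε → ι y` in norm, and
norms are weakly lower semicontinuous. Hence if `‖vε - x‖ → B`, the penalized costs
`Φε (ι vε) + ‖vε‖² / 2 + ‖vε - x‖² / 2` have limit at least `G y + B² / 2`, where
`G v = Φ (ι v) + ‖v‖² / 2` is `reducedCost ι Φ v`. For a minimizing sequence this gives a
minimizer (i). For penalized minimizers, comparison with `x` gives `G y + B² / 2 ≤ G x ≤ G y`,
hence `B = 0`, i.e. `vε → x` strongly (ii).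

To pass `Fε (ι vε) → F (ι y)` along an ultrafilter, the continuous convergence hypothesis is first
upgraded, by a sequence argument, to joint convergence of `(ε, w) ↦ Fε w` at `(0⁺, w)`.
-/

open Filter Set Topology Function Metric

theorem Ultrafilter.exists_tendsto_of_isCompact {α X : Type*} [TopologicalSpace X] {s : Set X}
    (hs : IsCompact s) (U : Ultrafilter α) {g : α → X} (hg : ∀ᶠ a in U, g a ∈ s) :
    ∃ x ∈ s, Tendsto g U (𝓝 x) :=
  hs.ultrafilter_le_nhds' (U.map g) hg

theorem Ultrafilter.exists_tendsto_norm_sub {α E : Type*} [SeminormedAddCommGroup E]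
    (U : Ultrafilter α) {f : α → E} {C : ℝ} (hC : ∀ᶠ a in U, ‖f a‖ ≤ C) (c : E) :
    ∃ B, Tendsto (fun a => ‖f a - c‖) U (𝓝 B) := by
  obtain ⟨B, -, hB⟩ := U.exists_tendsto_of_isCompact (isCompact_Icc (a := 0) (b := C + ‖c‖))
    (hC.mono fun a ha => ⟨norm_nonneg _, (norm_sub_le (f a) c).trans (by linarith)⟩)
  exact ⟨B, hB⟩

theorem tendsto_uncurry_of_forall_tendsto {α β γ : Type*} [TopologicalSpace β]
    [FirstCountableTopology β] [TopologicalSpace γ] {L : Filter α} [L.IsCountablyGenerated]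
    (hL : L ≤ cofinite) {f : α → β → γ} {b : β} {c : γ}
    (h : ∀ g : α → β, Tendsto g L (𝓝 b) → Tendsto (fun a => f a (g a)) L (𝓝 c)) :
    Tendsto (uncurry f) (L ×ˢ 𝓝 b) (𝓝 c) := by
  classical
  by_contra hf
  obtain ⟨N, hN, hbad⟩ := not_tendsto_iff_exists_frequently_notMem.1 hf
  obtain ⟨p, hp, hpN⟩ := frequently_iff_seq_forall.1 hbad
  -- Over each first coordinate of the bad sequence `p`, `g` picks a bad point; `g → b` since
  -- `L ≤ cofinite` discards the finitely many first coordinates of early terms.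
  let g : α → β := fun a => if h : ∃ n, (p n).1 = a then (p h.choose).2 else b
  have hg_bad : ∀ n, f (p n).1 (g (p n).1) ∉ N := by
    intro n
    have h : ∃ m, (p m).1 = (p n).1 := ⟨n, rfl⟩
    have hm : f (p h.choose).1 (p h.choose).2 ∉ N := hpN h.choose
    simpa only [g, dif_pos h, h.choose_spec] using hm
  have hg : Tendsto g L (𝓝 b) := by
    refine fun O hO => mem_map.2 ?_
    obtain ⟨n₀, hn₀⟩ := eventually_atTop.1 ((tendsto_snd.comp hp).eventually hO)
    have hfin : ((fun n => (p n).1) '' Iio n₀).Finite := (finite_Iio n₀).image _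
    filter_upwards [hL hfin.compl_mem_cofinite] with a ha
    by_cases h : ∃ n, (p n).1 = a
    · simp only [mem_preimage, g, dif_pos h]
      exact hn₀ _ (not_lt.1 fun hlt => ha ⟨_, hlt, h.choose_spec⟩)
    · simp only [mem_preimage, g, dif_neg h]
      exact mem_of_mem_nhds hO
  obtain ⟨n, hn⟩ := ((h g hg).comp (tendsto_fst.comp hp) |>.eventually hN).exists
  exact hg_bad n hn

theorem nhdsGT_le_cofinite (a : ℝ) : 𝓝[>] a ≤ cofinite :=
  (nhdsWithin_mono a fun _ hx => ne_of_gt hx).trans (nhdsNE_le_cofinite a)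

section WeakConvergence

variable {α V W : Type*} [NormedAddCommGroup V] [NormedSpace ℝ V]
  [NormedAddCommGroup W] [NormedSpace ℝ W]

theorem IsCompactOperator.tendsto_of_forall_dual_tendsto {ι : V →L[ℝ] W}
    (hι : IsCompactOperator ι) {U : Ultrafilter α} {f : α → V} {v : V} {C : ℝ}
    (hC : ∀ᶠ a in U, ‖f a‖ ≤ C)
    (hfv : ∀ g : StrongDual ℝ V, Tendsto (fun a => g (f a)) U (𝓝 (g v))) :
    Tendsto (fun a => ι (f a)) U (𝓝 (ι v)) := by
  obtain ⟨K, hK, hιK⟩ :=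
    (hι : IsCompactOperator (ι : V →ₗ[ℝ] W)).image_closedBall_subset_compact C
  obtain ⟨w, -, hw⟩ := U.exists_tendsto_of_isCompact hK
    (hC.mono fun a ha => hιK ⟨f a, mem_closedBall_zero_iff.2 ha, rfl⟩)
  suffices w = ι v by rwa [← this]
  exact (SeparatingDual.eq_iff_forall_dual_eq (R := ℝ)).2 fun g =>
    tendsto_nhds_unique ((g.continuous.tendsto w).comp hw) (hfv (g.comp ι))

theorem norm_sub_le_of_forall_dual_tendsto {l : Filter α} [l.NeBot] {f : α → V} {v : V}
    (hfv : ∀ g : StrongDual ℝ V, Tendsto (fun a => g (f a)) l (𝓝 (g v))) (c : V) {B : ℝ}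
    (hB : Tendsto (fun a => ‖f a - c‖) l (𝓝 B)) : ‖v - c‖ ≤ B := by
  obtain ⟨g, hg, hgv⟩ := exists_dual_vector'' ℝ (v - c)
  have hlim : Tendsto (fun a => g (f a - c)) l (𝓝 ‖v - c‖) := by
    have hgv' : g v - g c = ‖v - c‖ := by rw [← map_sub, hgv]; rfl
    simpa only [map_sub, hgv'] using (hfv g).sub_const (g c)
  refine le_of_tendsto_of_tendsto' hlim hB fun a => ?_
  calc g (f a - c) ≤ ‖g (f a - c)‖ := le_abs_self _
    _ ≤ ‖g‖ * ‖f a - c‖ := g.le_opNorm _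
    _ ≤ ‖f a - c‖ := mul_le_of_le_one_left (norm_nonneg _) hg

end WeakConvergence

section Hilbert

variable {α V W : Type*} [NormedAddCommGroup V] [InnerProductSpace ℝ V] [CompleteSpace V]
  [NormedAddCommGroup W] [NormedSpace ℝ W] {ι : V →L[ℝ] W}

theorem Ultrafilter.exists_forall_dual_tendsto (U : Ultrafilter α) {f : α → V} {C : ℝ}
    (hC : ∀ᶠ a in U, ‖f a‖ ≤ C) :
    ∃ v : V, ∀ g : StrongDual ℝ V, Tendsto (fun a => g (f a)) U (𝓝 (g v)) := by
  -- Banach–Alaoglu for the Riesz images `toDual (f a)`, then Riesz again for the limit.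
  let φ : α → WeakDual ℝ V := fun a => StrongDual.toWeakDual (InnerProductSpace.toDual ℝ V (f a))
  obtain ⟨ψ, -, hψ⟩ := U.exists_tendsto_of_isCompact
    (WeakDual.isCompact_closedBall (0 : StrongDual ℝ V) C) (g := φ)
    (hC.mono fun a ha => by simpa [φ] using ha)
  refine ⟨(InnerProductSpace.toDual ℝ V).symm (WeakDual.toStrongDual ψ), fun g => ?_⟩
  obtain ⟨z, rfl⟩ := (InnerProductSpace.toDual ℝ V).surjective g
  have hz := ((WeakDual.eval_continuous z).tendsto ψ).comp hψ
  simp only [Function.comp_def] at hz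
  convert hz using 2 with a
  · exact real_inner_comm _ _
  · rw [InnerProductSpace.toDual_apply_apply, real_inner_comm, InnerProductSpace.toDual_symm_apply]
    rfl


theorem IsCompactOperator.exists_tendsto_forall_norm_sub_le (hι : IsCompactOperator ι)
    (U : Ultrafilter α) {f : α → V} {C : ℝ} (hC : ∀ᶠ a in U, ‖f a‖ ≤ C) :
    ∃ v, Tendsto (fun a => ι (f a)) U (𝓝 (ι v)) ∧
      ∀ c B, Tendsto (fun a => ‖f a - c‖) U (𝓝 B) → ‖v - c‖ ≤ B := by
  obtain ⟨v, hfv⟩ := U.exists_forall_dual_tendsto hC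
  exact ⟨v, hι.tendsto_of_forall_dual_tendsto hC hfv,
    fun c _ hB => norm_sub_le_of_forall_dual_tendsto hfv c hB⟩

noncomputable def reducedCost (ι : V →L[ℝ] W) (Φ : W → ℝ) (v : V) : ℝ :=
  Φ (ι v) + 1 / 2 * ‖v‖ ^ 2

theorem IsCompactOperator.exists_reducedCost_add_sq_le (hι : IsCompactOperator ι)
    (U : Ultrafilter α) {f : α → V} {x : V} {ρ : ℝ} (hf : ∀ᶠ a in U, f a ∈ closedBall x ρ)
    {Φ : α → W → ℝ} {Φ₀ : W → ℝ}
    (hΦ : ∀ w, Tendsto (fun a => ι (f a)) U (𝓝 w) →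
      Tendsto (fun a => Φ a (ι (f a))) U (𝓝 (Φ₀ w)))
    {M : α → ℝ} {m : ℝ} (hM : Tendsto M U (𝓝 m))
    (hfM : ∀ᶠ a in U, reducedCost ι (Φ a) (f a) + 1 / 2 * ‖f a - x‖ ^ 2 ≤ M a) :
    ∃ y ∈ closedBall x ρ, ∃ B, Tendsto (fun a => ‖f a - x‖) U (𝓝 B) ∧ ‖y - x‖ ≤ B ∧
      reducedCost ι Φ₀ y + 1 / 2 * B ^ 2 ≤ m := by
  have hC : ∀ᶠ a in U, ‖f a‖ ≤ ‖x‖ + ρ := hf.mono fun a ha =>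
    (norm_le_norm_add_norm_sub' (f a) x).trans (by gcongr; exact mem_closedBall_iff_norm.1 ha)
  obtain ⟨y, hιy, hlsc⟩ := hι.exists_tendsto_forall_norm_sub_le U hC
  obtain ⟨A, hA⟩ := U.exists_tendsto_norm_sub hC 0
  obtain ⟨B, hB⟩ := U.exists_tendsto_norm_sub hC x
  have hyA : ‖y‖ ≤ A := by simpa using hlsc 0 A hA
  have hyB : ‖y - x‖ ≤ B := hlsc x B hB
  have hBρ : B ≤ ρ := le_of_tendsto hB (hf.mono fun a ha => mem_closedBall_iff_norm.1 ha)
  refine ⟨y, mem_closedBall_iff_norm.2 (hyB.trans hBρ), B, hB, hyB, ?_⟩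
  simp only [sub_zero] at hA
  have hlim : Tendsto (fun a => reducedCost ι (Φ a) (f a) + 1 / 2 * ‖f a - x‖ ^ 2) U
      (𝓝 (Φ₀ (ι y) + 1 / 2 * A ^ 2 + 1 / 2 * B ^ 2)) :=
    ((hΦ _ hιy).add ((hA.pow 2).const_mul _)).add ((hB.pow 2).const_mul _)
  have hyA2 : ‖y‖ ^ 2 ≤ A ^ 2 := pow_le_pow_left₀ (norm_nonneg y) hyA 2
  have := le_of_tendsto_of_tendsto hlim hM hfM
  unfold reducedCost
  linarith

theorem IsCompactOperator.exists_isMinOn_reducedCost_add_sq (hι : IsCompactOperator ι)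
    {Φ : W → ℝ} (hΦ : Continuous Φ) (x : V) {ρ : ℝ} (hρ : 0 ≤ ρ) :
    ∃ v ∈ closedBall x ρ,
      IsMinOn (fun u => reducedCost ι Φ u + 1 / 2 * ‖u - x‖ ^ 2) (closedBall x ρ) v := by
  set E := fun u => reducedCost ι Φ u + 1 / 2 * ‖u - x‖ ^ 2
  have hbdd : BddBelow (E '' closedBall x ρ) := by
    obtain ⟨c, hc⟩ := ((hι : IsCompactOperator (ι : V →ₗ[ℝ] W)).isCompact_closure_image_of_bounded
      isBounded_closedBall).bddBelow_image hΦ.continuousOn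
    refine ⟨c, ?_⟩
    rintro _ ⟨u, hu, rfl⟩
    have := hc ⟨ι u, subset_closure (mem_image_of_mem _ hu), rfl⟩
    simp only [E, reducedCost]
    nlinarith [sq_nonneg ‖u‖, sq_nonneg ‖u - x‖]
  obtain ⟨m, -, hm, hmE⟩ := exists_seq_tendsto_sInf
    ((nonempty_closedBall.2 hρ).image E) hbdd
  choose f hf hfm using hmE
  obtain ⟨y, hy, B, -, hyB, hyE⟩ := hι.exists_reducedCost_add_sq_le
    (Ultrafilter.of atTop) (Eventually.of_forall hf) (fun w hw => (hΦ.tendsto w).comp hw)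
    (hm.mono_left (Ultrafilter.of_le atTop)) (Eventually.of_forall fun n => (hfm n).le)
  refine ⟨y, hy, fun u hu => ?_⟩
  have hyB2 : ‖y - x‖ ^ 2 ≤ B ^ 2 := pow_le_pow_left₀ (norm_nonneg _) hyB 2
  calc E y ≤ reducedCost ι Φ y + 1 / 2 * B ^ 2 := by simp only [E]; linarith
    _ ≤ sInf (E '' closedBall x ρ) := hyE
    _ ≤ E u := csInf_le hbdd (mem_image_of_mem E hu)

theorem IsCompactOperator.tendsto_of_reducedCost_add_sq_le (hι : IsCompactOperator ι)
    {L : Filter α} {Φ : α → W → ℝ} {Φ₀ : W → ℝ}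
    (hΦ : ∀ w, Tendsto (uncurry Φ) (L ×ˢ 𝓝 w) (𝓝 (Φ₀ w))) {x : V} {ρ : ℝ}
    (hx : IsMinOn (reducedCost ι Φ₀) (closedBall x ρ) x) {v : α → V}
    (hv : ∀ᶠ a in L, v a ∈ closedBall x ρ ∧
      reducedCost ι (Φ a) (v a) + 1 / 2 * ‖v a - x‖ ^ 2 ≤ reducedCost ι (Φ a) x) :
    Tendsto v L (𝓝 x) := by
  refine tendsto_iff_ultrafilter _ _ _ |>.2 fun U hU => ?_
  have hvU := hv.filter_mono hU
  have hΦx : Tendsto (fun a => reducedCost ι (Φ a) x) U (𝓝 (reducedCost ι Φ₀ x)) :=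
    ((hΦ _).comp ((tendsto_id'.2 hU).prodMk tendsto_const_nhds)).add_const _
  obtain ⟨y, hy, B, hB, -, hyB⟩ := hι.exists_reducedCost_add_sq_le U (hvU.mono fun a ha => ha.1)
    (fun w hw => (hΦ w).comp ((tendsto_id'.2 hU).prodMk hw)) hΦx (hvU.mono fun a ha => ha.2)
  have hB0 : B = 0 := by
    have := isMinOn_iff.1 hx y hy
    have hB_nonneg : 0 ≤ B := ge_of_tendsto' hB fun _ => norm_nonneg _
    nlinarith
  rw [tendsto_iff_norm_sub_tendsto_zero, ← hB0]
  exact hB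

end Hilbert

theorem adapted_penalization_general
    {V W : Type*} [NormedAddCommGroup V] [InnerProductSpace ℝ V] [CompleteSpace V]
    [NormedAddCommGroup W] [NormedSpace ℝ W]
    (ι : V →L[ℝ] W) (hι : IsCompactOperator ι)
    (F : W → ℝ)
    (Fε : ℝ → W → ℝ) (hFε : ∀ ε : ℝ, 0 < ε → Continuous (Fε ε))
    (hconv : ∀ (w : W) (wε : ℝ → W),
      Tendsto wε (nhdsWithin 0 (Ioi 0)) (nhds w) →
      Tendsto (fun ε => Fε ε (wε ε)) (nhdsWithin 0 (Ioi 0)) (nhds (F w)))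
    (xb : V) (ρ : ℝ) (hρ : 0 < ρ)
    (hloc : ∀ v : V, ‖v - xb‖ ≤ ρ →
      F (ι xb) + (1 / 2) * ‖xb‖ ^ 2 ≤ F (ι v) + (1 / 2) * ‖v‖ ^ 2) :
    -- (i) existence of global minimizers of the penalized functional over the ball
    (∀ ε : ℝ, 0 < ε → ∃ v ∈ Metric.closedBall xb ρ, ∀ u ∈ Metric.closedBall xb ρ,
      Fε ε (ι v) + (1 / 2) * ‖v‖ ^ 2 + (1 / 2) * ‖v - xb‖ ^ 2 ≤
        Fε ε (ι u) + (1 / 2) * ‖u‖ ^ 2 + (1 / 2) * ‖u - xb‖ ^ 2) ∧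
    -- (ii) strong convergence of any such family, and local minimality for small ε
    (∀ vε : ℝ → V,
      (∀ ε : ℝ, 0 < ε → vε ε ∈ Metric.closedBall xb ρ ∧
        ∀ u ∈ Metric.closedBall xb ρ,
          Fε ε (ι (vε ε)) + (1 / 2) * ‖vε ε‖ ^ 2 + (1 / 2) * ‖vε ε - xb‖ ^ 2 ≤
            Fε ε (ι u) + (1 / 2) * ‖u‖ ^ 2 + (1 / 2) * ‖u - xb‖ ^ 2) →
      Tendsto vε (nhdsWithin 0 (Ioi 0)) (nhds xb) ∧
      ∃ ε₀ > (0:ℝ), ∀ ε : ℝ, 0 < ε → ε ≤ ε₀ → ∃ δ > (0:ℝ), ∀ u : V, ‖u - vε ε‖ ≤ δ →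
        Fε ε (ι (vε ε)) + (1 / 2) * ‖vε ε‖ ^ 2 + (1 / 2) * ‖vε ε - xb‖ ^ 2 ≤
          Fε ε (ι u) + (1 / 2) * ‖u‖ ^ 2 + (1 / 2) * ‖u - xb‖ ^ 2) := by
  refine ⟨fun ε hε => ?_, fun vε hvε => ?_⟩
  · obtain ⟨v, hv, hmin⟩ := hι.exists_isMinOn_reducedCost_add_sq (hFε ε hε) xb hρ.le
    exact ⟨v, hv, isMinOn_iff.1 hmin⟩
  have hjoint : ∀ w, Tendsto (uncurry Fε) (𝓝[>] 0 ×ˢ 𝓝 w) (𝓝 (F w)) := fun w =>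
    tendsto_uncurry_of_forall_tendsto (nhdsGT_le_cofinite 0) (hconv w)
  have hlim : Tendsto vε (𝓝[>] 0) (𝓝 xb) := by
    refine hι.tendsto_of_reducedCost_add_sq_le hjoint
      (isMinOn_iff.2 fun v hv => hloc v (mem_closedBall_iff_norm.1 hv)) ?_
    filter_upwards [self_mem_nhdsWithin] with ε hε
    refine ⟨(hvε ε hε).1, ?_⟩
    simpa [reducedCost] using (hvε ε hε).2 xb (mem_closedBall_self hρ.le)
  refine ⟨hlim, ?_⟩
  obtain ⟨ε₀, hε₀, hball⟩ := (nhdsGT_basis 0).eventually_iff.1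
    (hlim.eventually (isOpen_ball.mem_nhds (mem_ball_self hρ)))
  refine ⟨ε₀ / 2, half_pos hε₀, fun ε hε hεε₀ => ?_⟩
  have hmin : IsMinOn (fun u => reducedCost ι (Fε ε) u + 1 / 2 * ‖u - xb‖ ^ 2)
      (closedBall xb ρ) (vε ε) := isMinOn_iff.2 (hvε ε hε).2
  obtain ⟨δ, hδ, hδmin⟩ := nhds_basis_closedBall.eventually_iff.1 (hmin.isLocalMin
    (mem_of_superset (isOpen_ball.mem_nhds (hball ⟨hε, by linarith⟩)) ball_subset_closedBall))
  exact ⟨δ, hδ, fun u hu => hδmin (mem_closedBall_iff_norm.2 hu)⟩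

/-- **Adapted penalization (à la Barbu).**  Let `V` be a real Hilbert space, `ι : V → W`
a compact linear operator, `F : W → ℝ` continuous and `Fε` continuous approximations with
the continuous convergence property `Fε(wε) → F(w)` whenever `wε → w` as `ε ↓ 0`.  If `xb`
is a local minimizer of `G(v) = F(ι v) + ½‖v‖²` with radius `ρ`, then (i) for each `ε > 0`
the penalized functional `Gε(v) = Fε(ι v) + ½‖v‖² + ½‖v − xb‖²` has a global minimizer
`vε` over the closed ball `B(xb,ρ)`, and (ii) any such family converges strongly to `xb`
as `ε ↓ 0`; in particular `vε` is a local minimizer of `Gε` on `V` for small `ε`. -/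
theorem adapted_penalization
    {V W : Type*} [NormedAddCommGroup V] [InnerProductSpace ℝ V] [CompleteSpace V]
    [NormedAddCommGroup W] [NormedSpace ℝ W]
    (ι : V →L[ℝ] W) (hι : IsCompactOperator ι)
    (F : W → ℝ) (hF : Continuous F)
    (Fε : ℝ → W → ℝ) (hFε : ∀ ε : ℝ, 0 < ε → Continuous (Fε ε))
    (hconv : ∀ (w : W) (wε : ℝ → W),
      Tendsto wε (nhdsWithin 0 (Ioi 0)) (nhds w) →
      Tendsto (fun ε => Fε ε (wε ε)) (nhdsWithin 0 (Ioi 0)) (nhds (F w)))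
    (xb : V) (ρ : ℝ) (hρ : 0 < ρ)
    (hloc : ∀ v : V, ‖v - xb‖ ≤ ρ →
      F (ι xb) + (1 / 2) * ‖xb‖ ^ 2 ≤ F (ι v) + (1 / 2) * ‖v‖ ^ 2) :
    -- (i) existence of global minimizers of the penalized functional over the ball
    (∀ ε : ℝ, 0 < ε → ∃ v ∈ Metric.closedBall xb ρ, ∀ u ∈ Metric.closedBall xb ρ,
      Fε ε (ι v) + (1 / 2) * ‖v‖ ^ 2 + (1 / 2) * ‖v - xb‖ ^ 2 ≤
        Fε ε (ι u) + (1 / 2) * ‖u‖ ^ 2 + (1 / 2) * ‖u - xb‖ ^ 2) ∧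
    -- (ii) strong convergence of any such family, and local minimality for small ε
    (∀ vε : ℝ → V,
      (∀ ε : ℝ, 0 < ε → vε ε ∈ Metric.closedBall xb ρ ∧
        ∀ u ∈ Metric.closedBall xb ρ,
          Fε ε (ι (vε ε)) + (1 / 2) * ‖vε ε‖ ^ 2 + (1 / 2) * ‖vε ε - xb‖ ^ 2 ≤
            Fε ε (ι u) + (1 / 2) * ‖u‖ ^ 2 + (1 / 2) * ‖u - xb‖ ^ 2) →
      Tendsto vε (nhdsWithin 0 (Ioi 0)) (nhds xb) ∧
      ∃ ε₀ > (0:ℝ), ∀ ε : ℝ, 0 < ε → ε ≤ ε₀ → ∃ δ > (0:ℝ), ∀ u : V, ‖u - vε ε‖ ≤ δ →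
        Fε ε (ι (vε ε)) + (1 / 2) * ‖vε ε‖ ^ 2 + (1 / 2) * ‖vε ε - xb‖ ^ 2 ≤
          Fε ε (ι u) + (1 / 2) * ‖u‖ ^ 2 + (1 / 2) * ‖u - xb‖ ^ 2) :=
  adapted_penalization_general ι hι F Fε hFε hconv xb ρ hρ hloc
end
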